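/- arXiv:2412.15026 — 5 statements merged into one kernel-verified Lean document; each statement's English description precedes it below -/
import Mathlib

section
/- Let (Ω,μ) be a σ-finite measure space, V an n-dimensional Hilbert space, and F : Ω → K(V) a measurable convex-set valued map with ∫_Ω ‖F‖_V dμ < ∞, where ‖F(x)‖_V := sup_{u ∈ F(x)} ‖u‖. Then the Aumann integral ∫_Ω F dμ := { ∫_Ω f dμ : f measurable selection of F } is a nonempty, convex, symmetric, bounded subset of V, and its norm (supremum of norms of its elements) satisfies (1/n) ∫_Ω ‖F‖_V dμ ≤ ‖∫_Ω F dμ‖_V ≤ ∫_Ω ‖F‖_V dμ. -/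
/-!
Everything except the lower bound is immediate from the definition. For the lower bound, fix an
orthonormal basis `b`. By symmetry of `F x`, `|⟪b i, u⟫|` is at most the support function
`σ_i x = sup_{u ∈ F x} ⟪b i, u⟫`, so `‖F x‖ ≤ ∑ i, σ_i x`, and it suffices that `∫ σ_i` is at most
the norm of the Aumann integral. To see this, let `P_c x` be the nearest point of `F x` to
`c • b i`: it is a measurable selection, and the variational inequality of the projection gives
`σ_i x ≤ ⟪b i, P_c x⟫ + 2 ‖F x‖² / c`. Letting `c → ∞`, dominated convergence yields
`∫ σ_i = lim ⟪b i, ∫ P_c⟫`.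
-/

open MeasureTheory Metric Set Filter Topology
open scoped RealInnerProductSpace

def aumannIntegral {Ω V : Type*} [MeasurableSpace Ω] [NormedAddCommGroup V] [NormedSpace ℝ V]
    (μ : Measure Ω) (F : Ω → Set V) : Set V :=
  {v | ∃ f : Ω → V, Integrable f μ ∧ (∀ᵐ x ∂μ, f x ∈ F x) ∧ v = ∫ x, f x ∂μ}

section HittingSets

variable {Ω X : Type*} [MeasurableSpace Ω] {F : Ω → Set X}

theorem measurableSet_setOf_inter_nonempty_of_isClosed [PseudoMetricSpace X]
    (hmeas : ∀ U : Set X, IsOpen U → MeasurableSet {x | (F x ∩ U).Nonempty})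
    (hcp : ∀ x, IsCompact (F x)) {C : Set X} (hC : IsClosed C) :
    MeasurableSet {x | (F x ∩ C).Nonempty} := by
  have : {x | (F x ∩ C).Nonempty} =
      ⋂ m : ℕ, {x | (F x ∩ thickening (1 / ((m : ℝ) + 1)) C).Nonempty} := by
    ext x
    simp only [mem_ofPred_eq, mem_iInter]
    refine ⟨fun hx m => hx.mono (inter_subset_inter_right _
      (self_subset_thickening (by positivity) C)), fun hx => ?_⟩
    by_contra hdisj
    rw [not_nonempty_iff_eq_empty, ← disjoint_iff_inter_eq_empty] at hdisj
    obtain ⟨δ, hδ, hsep⟩ := hdisj.exists_thickenings (hcp x) hC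
    obtain ⟨m, hm⟩ := exists_nat_one_div_lt hδ
    obtain ⟨u, huF, huC⟩ := hx m
    exact disjoint_left.1 hsep (self_subset_thickening hδ _ huF) (thickening_mono hm.le C huC)
  rw [this]
  exact .iInter fun m => hmeas _ isOpen_thickening

theorem measurable_sSup_image [TopologicalSpace X]
    (hmeas : ∀ U : Set X, IsOpen U → MeasurableSet {x | (F x ∩ U).Nonempty})
    (hne : ∀ x, (F x).Nonempty) (hcp : ∀ x, IsCompact (F x)) {φ : X → ℝ} (hφ : Continuous φ) :
    Measurable fun x => sSup (φ '' F x) := by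
  refine measurable_of_Ioi fun t => ?_
  have : (fun x => sSup (φ '' F x)) ⁻¹' Ioi t = {x | (F x ∩ φ ⁻¹' Ioi t).Nonempty} := by
    ext x
    simp only [mem_preimage, mem_Ioi, mem_ofPred_eq,
      lt_csSup_iff ((hcp x).image hφ).bddAbove ((hne x).image φ), exists_mem_image]
    rfl
  rw [this]
  exact hmeas _ (hφ.isOpen_preimage _ isOpen_Ioi)

end HittingSets

section Projection

variable {V : Type*} [NormedAddCommGroup V] [InnerProductSpace ℝ V]

theorem norm_sub_sq_add_norm_sub_sq_le {p v w : V} (h : ⟪p - v, w - v⟫ ≤ 0) :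
    ‖p - v‖ ^ 2 + ‖w - v‖ ^ 2 ≤ ‖p - w‖ ^ 2 := by
  have := norm_sub_sq_real (p - v) (w - v)
  rw [sub_sub_sub_cancel_right] at this
  linarith

theorem norm_sub_le_of_inner_sub_le_zero {p v w : V} (h : ⟪p - v, w - v⟫ ≤ 0) :
    ‖p - v‖ ≤ ‖p - w‖ :=
  pow_le_pow_iff_left₀ (norm_nonneg _) (norm_nonneg _) two_ne_zero |>.1 <|
    (le_add_of_nonneg_right (sq_nonneg _)).trans (norm_sub_sq_add_norm_sub_sq_le h)

theorem eq_of_inner_sub_le_zero_of_norm_sub_le {p v w : V} (h : ⟪p - v, w - v⟫ ≤ 0)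
    (hw : ‖p - w‖ ≤ ‖p - v‖) : w = v := by
  have := norm_sub_sq_add_norm_sub_sq_le h
  have : ‖w - v‖ ^ 2 ≤ 0 := by nlinarith [norm_nonneg (p - w), norm_nonneg (p - v)]
  exact sub_eq_zero.1 (norm_eq_zero.1 (pow_eq_zero_iff two_ne_zero |>.1
    (le_antisymm this (sq_nonneg _))))

theorem mul_inner_sub_le_of_inner_smul_sub_le_zero {e v w : V} {c : ℝ}
    (h : ⟪c • e - v, w - v⟫ ≤ 0) : c * (⟪e, w⟫ - ⟪e, v⟫) ≤ ‖v‖ * ‖w - v‖ := by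
  rw [inner_sub_left, real_inner_smul_left] at h
  rw [← inner_sub_right]
  linarith [real_inner_le_norm v (w - v)]

variable {Ω : Type*} [MeasurableSpace Ω] {F : Ω → Set V}

theorem measurable_of_inner_sub_le_zero [MeasurableSpace V] [BorelSpace V]
    (hmeas : ∀ U : Set V, IsOpen U → MeasurableSet {x | (F x ∩ U).Nonempty})
    (hcp : ∀ x, IsCompact (F x)) (p : V) {P : Ω → V} (hPF : ∀ x, P x ∈ F x)
    (hP : ∀ x, ∀ w ∈ F x, ⟪p - P x, w - P x⟫ ≤ 0) : Measurable P := by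
  refine measurable_of_isClosed fun C hC => ?_
  -- `P x ∈ C` iff `F x ∩ C` has points as close to `p` as `P x`, the nearest point being unique
  have : P ⁻¹' C = ⋂ s : ℚ, ({x | (F x ∩ ball p s).Nonempty}ᶜ ∪
      {x | (F x ∩ (C ∩ closedBall p s)).Nonempty}) := by
    ext x
    simp only [mem_preimage, mem_iInter, mem_union, mem_compl_iff, mem_ofPred_eq]
    constructor
    · intro hx s
      refine or_iff_not_imp_left.2 fun hball => ?_
      obtain ⟨w, hwF, hw⟩ := not_not.1 hball
      rw [mem_ball', dist_eq_norm] at hw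
      refine ⟨P x, hPF x, hx, ?_⟩
      rw [mem_closedBall', dist_eq_norm]
      exact (norm_sub_le_of_inner_sub_le_zero (hP x w hwF)).trans hw.le
    · intro hx
      have hnear : ∀ s : ℚ, ‖p - P x‖ < s → ∃ w ∈ F x ∩ C, ‖p - w‖ ≤ s := fun s hs => by
        obtain ⟨w, hwF, hwC, hw⟩ := (hx s).resolve_left
          (not_not.2 ⟨P x, hPF x, by rwa [mem_ball', dist_eq_norm]⟩)
        exact ⟨w, ⟨hwF, hwC⟩, by rwa [mem_closedBall', dist_eq_norm] at hw⟩
      obtain ⟨s, hs⟩ := exists_rat_gt ‖p - P x‖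
      obtain ⟨u, ⟨huF, huC⟩, hu⟩ := ((hcp x).inter_right hC).exists_isMinOn
        ((hnear s hs).imp fun _ h => h.1)
        (continuous_const.sub continuous_id).norm.continuousOn
      have hup : ‖p - u‖ ≤ ‖p - P x‖ := le_of_forall_lt_rat_imp_le fun s hs => by
        obtain ⟨w, hw, hws⟩ := hnear s hs
        exact (isMinOn_iff.1 hu w hw).trans hws
      rwa [← eq_of_inner_sub_le_zero_of_norm_sub_le (hP x u huF) hup]
  rw [this]
  exact .iInter fun s => .union (hmeas _ isOpen_ball).compl
    (measurableSet_setOf_inter_nonempty_of_isClosed hmeas hcp (hC.inter isClosed_closedBall))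

end Projection

section Aumann

variable {Ω V : Type*} [MeasurableSpace Ω] {μ : Measure Ω} {F : Ω → Set V}

theorem exists_measurable_inner_sub_le_zero [NormedAddCommGroup V] [InnerProductSpace ℝ V]
    [MeasurableSpace V] [BorelSpace V]
    (hmeas : ∀ U : Set V, IsOpen U → MeasurableSet {x | (F x ∩ U).Nonempty})
    (hne : ∀ x, (F x).Nonempty) (hcp : ∀ x, IsCompact (F x)) (hconv : ∀ x, Convex ℝ (F x))
    (p : V) :
    ∃ P : Ω → V, Measurable P ∧ ∀ x, P x ∈ F x ∧ ∀ w ∈ F x, ⟪p - P x, w - P x⟫ ≤ 0 := by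
  have hproj : ∀ x, ∃ v ∈ F x, ∀ w ∈ F x, ⟪p - v, w - v⟫ ≤ 0 := fun x => by
    obtain ⟨v, hv, hmin⟩ :=
      exists_norm_eq_iInf_of_complete_convex (hne x) (hcp x).isComplete (hconv x) p
    exact ⟨v, hv, (norm_eq_iInf_iff_real_inner_le_zero (hconv x) hv).1 hmin⟩
  choose P hPF hP using hproj
  exact ⟨P, measurable_of_inner_sub_le_zero hmeas hcp p hPF hP, fun x => ⟨hPF x, hP x⟩⟩

section Normed

variable [NormedAddCommGroup V] [NormedSpace ℝ V]

theorem zero_mem_aumannIntegral (h0 : ∀ x, (0 : V) ∈ F x) : (0 : V) ∈ aumannIntegral μ F :=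
  ⟨0, integrable_zero _ _ _, .of_forall h0, integral_zero _ _ |>.symm⟩

theorem convex_aumannIntegral (hconv : ∀ x, Convex ℝ (F x)) :
    Convex ℝ (aumannIntegral μ F) := by
  rintro _ ⟨f, hf, hfF, rfl⟩ _ ⟨g, hg, hgF, rfl⟩ a b ha hb hab
  refine ⟨a • f + b • g, (hf.smul a).add (hg.smul b), ?_, ?_⟩
  · filter_upwards [hfF, hgF] with x hfx hgx
    exact hconv x hfx hgx ha hb hab
  · rw [Pi.add_def, integral_add (hf.smul a) (hg.smul b)]
    simp only [Pi.smul_apply, integral_smul]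

theorem neg_mem_aumannIntegral (hsym : ∀ x, ∀ u ∈ F x, -u ∈ F x) {v : V}
    (hv : v ∈ aumannIntegral μ F) : -v ∈ aumannIntegral μ F := by
  obtain ⟨f, hf, hfF, rfl⟩ := hv
  refine ⟨-f, hf.neg, ?_, (integral_neg _).symm⟩
  filter_upwards [hfF] with x hx
  exact hsym x _ hx

theorem norm_le_integral_of_mem_aumannIntegral {h : Ω → ℝ}
    (hbound : ∀ x, ∀ u ∈ F x, ‖u‖ ≤ h x) (hint : Integrable h μ) {v : V}
    (hv : v ∈ aumannIntegral μ F) : ‖v‖ ≤ ∫ x, h x ∂μ := by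
  obtain ⟨f, hf, hfF, rfl⟩ := hv
  refine (norm_integral_le_integral_norm f).trans (integral_mono_ae hf.norm hint ?_)
  filter_upwards [hfF] with x hx
  exact hbound x _ hx

end Normed

variable [NormedAddCommGroup V] [InnerProductSpace ℝ V]

theorem integrable_sSup_inner
    (hmeas : ∀ U : Set V, IsOpen U → MeasurableSet {x | (F x ∩ U).Nonempty})
    (hne : ∀ x, (F x).Nonempty) (hcp : ∀ x, IsCompact (F x)) {h : Ω → ℝ}
    (hbound : ∀ x, ∀ u ∈ F x, ‖u‖ ≤ h x) (hint : Integrable h μ) (e : V) :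
    Integrable (fun x => sSup ((fun u => ⟪e, u⟫) '' F x)) μ := by
  have hinner : Continuous fun u : V => ⟪e, u⟫ := continuous_const.inner continuous_id
  refine (hint.const_mul ‖e‖).mono'
    (measurable_sSup_image hmeas hne hcp hinner).aestronglyMeasurable (.of_forall fun x => ?_)
  have hle : ∀ u ∈ F x, |⟪e, u⟫| ≤ ‖e‖ * h x := fun u hu =>
    (abs_real_inner_le_norm e u).trans
      (mul_le_mul_of_nonneg_left (hbound x u hu) (norm_nonneg e))
  obtain ⟨u₀, hu₀⟩ := hne x
  rw [Real.norm_eq_abs, abs_le]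
  constructor
  · exact (neg_le_of_abs_le (hle u₀ hu₀)).trans
      (le_csSup ((hcp x).image hinner).bddAbove (mem_image_of_mem _ hu₀))
  · exact csSup_le ((hne x).image _)
      (forall_mem_image.2 fun u hu => (le_abs_self _).trans (hle u hu))

theorem integral_sSup_inner_le [CompleteSpace V] [SecondCountableTopology V]
    (hmeas : ∀ U : Set V, IsOpen U → MeasurableSet {x | (F x ∩ U).Nonempty})
    (hne : ∀ x, (F x).Nonempty) (hcp : ∀ x, IsCompact (F x)) (hconv : ∀ x, Convex ℝ (F x))
    {h : Ω → ℝ} (hbound : ∀ x, ∀ u ∈ F x, ‖u‖ ≤ h x) (hint : Integrable h μ) (e : V) {S : ℝ}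
    (hS : ∀ v ∈ aumannIntegral μ F, ⟪e, v⟫ ≤ S) :
    ∫ x, sSup ((fun u => ⟪e, u⟫) '' F x) ∂μ ≤ S := by
  borelize V
  set σ : Ω → ℝ := fun x => sSup ((fun u => ⟪e, u⟫) '' F x)
  choose P hPmeas hP using fun k : ℕ =>
    exists_measurable_inner_sub_le_zero hmeas hne hcp hconv (((k : ℝ) + 1) • e)
  have hPint : ∀ k, Integrable (P k) μ := fun k =>
    hint.mono' (hPmeas k).aestronglyMeasurable (.of_forall fun x => hbound x _ (hP k x).1)
  have hP_le_σ : ∀ k x, ⟪e, P k x⟫ ≤ σ x := fun k x =>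
    le_csSup ((hcp x).image (continuous_const.inner continuous_id)).bddAbove
      (mem_image_of_mem _ (hP k x).1)
  -- the nearest point to `(k + 1) • e` almost maximizes `⟪e, ·⟫` on `F x`
  have hσ_le_P : ∀ (k : ℕ) x, σ x - 2 * h x ^ 2 * (1 / ((k : ℝ) + 1)) ≤ ⟪e, P k x⟫ := by
    intro k x
    have hPx := hbound x _ (hP k x).1
    rw [sub_le_iff_le_add]
    refine csSup_le ((hne x).image _) (forall_mem_image.2 fun w hw => ?_)
    have hvi := mul_inner_sub_le_of_inner_smul_sub_le_zero ((hP k x).2 w hw)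
    have hdist : ‖P k x‖ * ‖w - P k x‖ ≤ h x * (2 * h x) := mul_le_mul hPx
      ((norm_sub_le_of_le (hbound x w hw) hPx).trans_eq (two_mul _).symm) (norm_nonneg _)
      ((norm_nonneg _).trans hPx)
    have : ⟪e, w⟫ - ⟪e, P k x⟫ ≤ 2 * h x ^ 2 * (1 / ((k : ℝ) + 1)) := by
      rw [mul_one_div, le_div_iff₀ (by positivity)]
      linarith
    linarith
  have hlim : ∀ x, Tendsto (fun k => ⟪e, P k x⟫) atTop (𝓝 (σ x)) := fun x => by
    refine tendsto_of_tendsto_of_tendsto_of_le_of_le ?_ tendsto_const_nhds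
      (hσ_le_P · x) (hP_le_σ · x)
    simpa using (tendsto_const_nhds (x := σ x)).sub
      (tendsto_one_div_add_atTop_nhds_zero_nat.const_mul (2 * h x ^ 2))
  have hdct : Tendsto (fun k => ∫ x, ⟪e, P k x⟫ ∂μ) atTop (𝓝 (∫ x, σ x ∂μ)) :=
    tendsto_integral_of_dominated_convergence (fun x => ‖e‖ * h x)
      (fun k => (continuous_const.inner continuous_id).comp_aestronglyMeasurable (hPint k).1)
      (hint.const_mul ‖e‖) (fun k => .of_forall fun x => (abs_real_inner_le_norm _ _).trans
        (mul_le_mul_of_nonneg_left (hbound x _ (hP k x).1) (norm_nonneg e)))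
      (.of_forall hlim)
  refine le_of_tendsto' hdct fun k => ?_
  rw [integral_inner (hPint k)]
  exact hS _ ⟨P k, hPint k, .of_forall fun x => (hP k x).1, rfl⟩

end Aumann

theorem Convex.zero_mem_of_neg_mem {E : Type*} [AddCommGroup E] [Module ℝ E] {K : Set E}
    (hconv : Convex ℝ K) (hne : K.Nonempty) (hsym : ∀ u ∈ K, -u ∈ K) : (0 : E) ∈ K := by
  obtain ⟨u, hu⟩ := hne
  have half : (0 : ℝ) ≤ 1 / 2 := by norm_num
  simpa using hconv hu (hsym u hu) half half (add_halves 1)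

theorem norm_le_sum_abs_inner {ι V : Type*} [Fintype ι] [NormedAddCommGroup V]
    [InnerProductSpace ℝ V] (b : OrthonormalBasis ι ℝ V) (u : V) : ‖u‖ ≤ ∑ i, |⟪b i, u⟫| :=
  calc ‖u‖ = ‖∑ i, ⟪b i, u⟫ • b i‖ := by rw [b.sum_repr' u]
    _ ≤ ∑ i, ‖⟪b i, u⟫ • b i‖ := norm_sum_le _ _
    _ = ∑ i, |⟪b i, u⟫| := by simp [norm_smul, b.norm_eq_one]

theorem sSup_norm_le_sum_sSup_inner {ι V : Type*} [Fintype ι] [NormedAddCommGroup V]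
    [InnerProductSpace ℝ V] (b : OrthonormalBasis ι ℝ V) {K : Set V} (hne : K.Nonempty)
    (hcp : IsCompact K) (hsym : ∀ u ∈ K, -u ∈ K) :
    sSup ((fun u => ‖u‖) '' K) ≤ ∑ i, sSup ((fun u => ⟪b i, u⟫) '' K) := by
  refine csSup_le (hne.image _) (forall_mem_image.2 fun u hu => ?_)
  refine (norm_le_sum_abs_inner b u).trans (Finset.sum_le_sum fun i _ => abs_le'.2 ⟨?_, ?_⟩)
  all_goals refine le_csSup ((hcp.image (continuous_const.inner continuous_id)).bddAbove) ?_
  · exact mem_image_of_mem _ hu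
  · exact ⟨-u, hsym u hu, inner_neg_right _ _⟩

theorem aumann_integral_bound_general
    {Ω : Type*} [MeasurableSpace Ω] (μ : Measure Ω)
    {V : Type*} [NormedAddCommGroup V] [InnerProductSpace ℝ V] [FiniteDimensional ℝ V]
    (n : ℕ) (hn : Module.finrank ℝ V = n)
    (F : Ω → Set V)
    (hmeas : ∀ U : Set V, IsOpen U → MeasurableSet {x | (F x ∩ U).Nonempty})
    (hne : ∀ x, (F x).Nonempty)
    (hcp : ∀ x, IsCompact (F x))
    (hconv : ∀ x, Convex ℝ (F x))
    (hsym : ∀ x, ∀ u ∈ F x, -u ∈ F x)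
    (h : Ω → ℝ) (hh : ∀ x, h x = sSup ((fun u => ‖u‖) '' F x))
    (hint : Integrable h μ)
    (I : Set V)
    (hI : I = {v | ∃ f : Ω → V, Integrable f μ ∧ (∀ᵐ x ∂μ, f x ∈ F x) ∧ v = ∫ x, f x ∂μ}) :
    I.Nonempty ∧ Convex ℝ I ∧ (∀ v ∈ I, -v ∈ I) ∧ Bornology.IsBounded I ∧
      (1 / (n : ℝ)) * ∫ x, h x ∂μ ≤ sSup ((fun v => ‖v‖) '' I) ∧
      sSup ((fun v => ‖v‖) '' I) ≤ ∫ x, h x ∂μ := by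
  change I = aumannIntegral μ F at hI
  subst hI
  have hbound : ∀ x, ∀ u ∈ F x, ‖u‖ ≤ h x := fun x u hu =>
    hh x ▸ le_csSup ((hcp x).image continuous_norm).bddAbove (mem_image_of_mem _ hu)
  have hI_le : ∀ v ∈ aumannIntegral μ F, ‖v‖ ≤ ∫ x, h x ∂μ := fun v =>
    norm_le_integral_of_mem_aumannIntegral hbound hint
  have hbdd : BddAbove ((fun v => ‖v‖) '' aumannIntegral μ F) := ⟨_, forall_mem_image.2 hI_le⟩
  have h0I := zero_mem_aumannIntegral (μ := μ) fun x =>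
    (hconv x).zero_mem_of_neg_mem (hne x) (hsym x)
  refine ⟨⟨0, h0I⟩, convex_aumannIntegral hconv, fun v => neg_mem_aumannIntegral hsym,
    isBounded_iff_forall_norm_le.2 ⟨_, hI_le⟩, ?_,
    csSup_le ⟨_, mem_image_of_mem _ h0I⟩ (forall_mem_image.2 hI_le)⟩
  set S := sSup ((fun v => ‖v‖) '' aumannIntegral μ F)
  let b := (stdOrthonormalBasis ℝ V).reindex (finCongr hn)
  have hσ : ∀ i, ∫ x, sSup ((fun u => ⟪b i, u⟫) '' F x) ∂μ ≤ S := fun i =>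
    integral_sSup_inner_le hmeas hne hcp hconv hbound hint (b i) fun v hv =>
      (real_inner_le_norm _ _).trans (by
        rw [b.norm_eq_one, one_mul]; exact le_csSup hbdd (mem_image_of_mem _ hv))
  have hσint := fun i => integrable_sSup_inner hmeas hne hcp hbound hint (b i)
  have hS0 : 0 ≤ S := by simpa using le_csSup hbdd (mem_image_of_mem _ h0I)
  rw [one_div_mul_eq_div]
  refine div_le_of_le_mul₀ n.cast_nonneg hS0 ?_
  calc ∫ x, h x ∂μ ≤ ∫ x, ∑ i, sSup ((fun u => ⟪b i, u⟫) '' F x) ∂μ :=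
        integral_mono hint (integrable_finsetSum _ fun i _ => hσint i) fun x =>
          (hh x).trans_le (sSup_norm_le_sum_sSup_inner b (hne x) (hcp x) (hsym x))
    _ = ∑ i, ∫ x, sSup ((fun u => ⟪b i, u⟫) '' F x) ∂μ :=
        integral_finsetSum _ fun i _ => hσint i
    _ ≤ ∑ _i : Fin n, S := Finset.sum_le_sum fun i _ => hσ i
    _ = S * n := by simp [mul_comm]

/-- **The Aumann integral of an integrably bounded convex-set valued map.**
Let `(Ω, μ)` be σ-finite, `V` an `n`-dimensional real Hilbert space, and `F : Ω → K(V)` a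
measurable map whose values are nonempty, compact, symmetric, convex sets, with
`∫ ‖F‖ dμ < ∞` where `‖F(x)‖ = sup_{u ∈ F(x)} ‖u‖`. Then the Aumann integral
`∫ F dμ = { ∫ f dμ : f an integrable selection of F }` is a nonempty, convex, symmetric,
bounded subset of `V` whose norm satisfies
`(1/n) ∫ ‖F‖ dμ ≤ ‖∫ F dμ‖ ≤ ∫ ‖F‖ dμ`. -/
theorem aumann_integral_bound
    {Ω : Type*} [MeasurableSpace Ω] (μ : Measure Ω) [SigmaFinite μ]
    {V : Type*} [NormedAddCommGroup V] [InnerProductSpace ℝ V] [FiniteDimensional ℝ V]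
    (n : ℕ) (hn : Module.finrank ℝ V = n) (hn0 : 0 < n)
    (F : Ω → Set V)
    (hmeas : ∀ U : Set V, IsOpen U → MeasurableSet {x | (F x ∩ U).Nonempty})
    (hne : ∀ x, (F x).Nonempty)
    (hcp : ∀ x, IsCompact (F x))
    (hconv : ∀ x, Convex ℝ (F x))
    (hsym : ∀ x, ∀ u ∈ F x, -u ∈ F x)
    (h : Ω → ℝ) (hh : ∀ x, h x = sSup ((fun u => ‖u‖) '' F x))
    (hint : Integrable h μ)
    (I : Set V)
    (hI : I = {v | ∃ f : Ω → V, Integrable f μ ∧ (∀ᵐ x ∂μ, f x ∈ F x) ∧ v = ∫ x, f x ∂μ}) :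
    I.Nonempty ∧ Convex ℝ I ∧ (∀ v ∈ I, -v ∈ I) ∧ Bornology.IsBounded I ∧
      (1 / (n : ℝ)) * ∫ x, h x ∂μ ≤ sSup ((fun v => ‖v‖) '' I) ∧
      sSup ((fun v => ‖v‖) '' I) ≤ ∫ x, h x ∂μ :=
  aumann_integral_bound_general μ n hn F hmeas hne hcp hconv hsym h hh hint I hI
end

section
/- Let X be a Banach function space over Ω with the Fatou property, V a finite-dimensional Hilbert space, W : Ω → L(V) a matrix weight, and E ⊆ Ω measurable with 0 < μ(E) < ∞. If T_E is bounded on X_W and on (X')_{W^{-1}}, then the bilinear averaging operator T_E(f,g) := 1_E ⟨f⟩_E ⊗ ⟨g⟩_E maps X_W × (X')_{W^{-1}} into L¹_{W ⊗ W^{-1}}(Ω; V ⊗ V) with ‖T_E‖ ≤ ‖T_E‖_{X_W → X_W} · ‖T_E‖_{(X')_{W^{-1}} → (X')_{W^{-1}}}. Conversely, if the bilinear operator is bounded then T_E is bounded on X_W with ‖T_E‖_{X_W → X_W} ≤ ‖T_E‖_{X_W × (X')_{W^{-1}} → L¹_{W⊗W^{-1}}}. -/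
open MeasureTheory ENNReal
open scoped RealInnerProductSpace

/-- A Banach function space over a measure space `(Ω, μ)`, encoded through its (possibly infinite)
norm functional `N` on measurable real functions, satisfying the ideal property, the norm axioms,
saturation, and the Fatou property. -/
structure BFSpace (Ω : Type*) [MeasurableSpace Ω] (μ : Measure Ω) where
  N : (Ω → ℝ) → ℝ≥0∞
  congr : ∀ f g : Ω → ℝ, f =ᵐ[μ] g → N f = N g
  ideal : ∀ f g : Ω → ℝ, (∀ᵐ x ∂μ, |g x| ≤ |f x|) → N g ≤ N f
  add_le : ∀ f g : Ω → ℝ, N (f + g) ≤ N f + N g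
  smul_eq : ∀ (c : ℝ) (f : Ω → ℝ), N (c • f) = ENNReal.ofReal |c| * N f
  eq_zero_iff : ∀ f : Ω → ℝ, AEStronglyMeasurable f μ → (N f = 0 ↔ f =ᵐ[μ] 0)
  saturated : ∀ E : Set Ω, MeasurableSet E → 0 < μ E →
    ∃ G : Set Ω, G ⊆ E ∧ MeasurableSet G ∧ 0 < μ G ∧ N (G.indicator 1) < ⊤
  fatou : ∀ (f : ℕ → Ω → ℝ) (g : Ω → ℝ),
    (∀ᵐ x ∂μ, Filter.Tendsto (fun k => f k x) Filter.atTop (nhds (g x))) →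
    N g ≤ Filter.liminf (fun k => N (f k)) Filter.atTop

/-- The Köthe dual norm of a Banach function space. -/
noncomputable def BFSpace.dualN {Ω : Type*} [MeasurableSpace Ω] {μ : Measure Ω}
    (X : BFSpace Ω μ) (g : Ω → ℝ) : ℝ≥0∞ :=
  ⨆ (f : Ω → ℝ) (_ : X.N f ≤ 1), ∫⁻ x, ENNReal.ofReal |f x * g x| ∂μ

/-- The matrix-weighted norm `‖f‖_{X_W} = ‖ ‖W f‖_V ‖_X`. -/
noncomputable def BFSpace.wN {Ω : Type*} [MeasurableSpace Ω] {μ : Measure Ω}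
    (X : BFSpace Ω μ) {V : Type*} [NormedAddCommGroup V] [NormedSpace ℝ V]
    (W : Ω → V →L[ℝ] V) (f : Ω → V) : ℝ≥0∞ :=
  X.N fun x => ‖W x (f x)‖

/-- The averaging operator `T_E f = 1_E ⨍_E f dμ`. -/
noncomputable def avgOp {Ω : Type*} [MeasurableSpace Ω] (μ : Measure Ω)
    {V : Type*} [NormedAddCommGroup V] [NormedSpace ℝ V]
    (E : Set Ω) (f : Ω → V) : Ω → V :=
  E.indicator fun _ => (μ E).toReal⁻¹ • ∫ x in E, f x ∂μ

/-!
The direct bound is Hölder's inequality `∫ |F G| ≤ ‖F‖_X ‖G‖_{X'}` for `F = ‖W T_E f‖` and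
`G = ‖W⁻¹ T_E g‖`, followed by the two assumed bounds on `T_E`.

For the converse put `a = ⟨f⟩_E`. By the Lorentz–Luxemburg theorem `X'' = X` (Hahn–Banach in `L²`,
the Fatou property making the unit ball of `X` closed) it suffices to bound `∫_E |ψ| ‖W a‖` for `ψ`
in the unit ball of `X'`. Self-adjointness gives `⟪a, b⟫ = ⟪W a, W⁻¹ b⟫ ≤ ‖W a‖ ‖W⁻¹ b‖`, so the
bilinear form at `(f, g)` dominates `μ(E) ⟪a, ⟨g⟩_E⟫ = ∫_E ⟪a, g⟫`. The test function
`g = (|ψ| / ‖W a‖) W² a`, truncated to be integrable, has `‖W⁻¹ g‖ ≤ |ψ|` and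
`⟪a, g⟫ = |ψ| ‖W a‖`, which gives the required bound.
-/

namespace BFSpace

variable {Ω : Type*} [MeasurableSpace Ω] {μ : Measure Ω} (X : BFSpace Ω μ)

theorem N_zero : X.N 0 = 0 := by
  simpa using X.smul_eq 0 0

theorem N_inv_toReal_smul_self {f : Ω → ℝ} (h0 : X.N f ≠ 0) (htop : X.N f ≠ ⊤) :
    X.N ((X.N f).toReal⁻¹ • f) = 1 := by
  have hpos : 0 < (X.N f).toReal := ENNReal.toReal_pos h0 htop
  rw [X.smul_eq, abs_of_pos (inv_pos.2 hpos), ENNReal.ofReal_inv_of_pos hpos,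
    ENNReal.ofReal_toReal htop, ENNReal.inv_mul_cancel h0 htop]

theorem exists_pos_N_smul_le_one {f : Ω → ℝ} (htop : X.N f ≠ ⊤) :
    ∃ c : ℝ, 0 < c ∧ X.N (c • f) ≤ 1 := by
  rcases eq_or_ne (X.N f) 0 with h0 | h0
  · exact ⟨1, one_pos, by simp [h0]⟩
  · exact ⟨_, inv_pos.2 (ENNReal.toReal_pos h0 htop), (X.N_inv_toReal_smul_self h0 htop).le⟩

theorem lintegral_mul_le_dualN {f : Ω → ℝ} (hf : X.N f ≤ 1) (g : Ω → ℝ) :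
    ∫⁻ x, ENNReal.ofReal |f x * g x| ∂μ ≤ X.dualN g :=
  le_iSup₂ (f := fun f (_ : X.N f ≤ 1) => ∫⁻ x, ENNReal.ofReal |f x * g x| ∂μ) f hf

theorem dualN_mono {g₁ g₂ : Ω → ℝ} (h : ∀ᵐ x ∂μ, |g₁ x| ≤ |g₂ x|) :
    X.dualN g₁ ≤ X.dualN g₂ := by
  refine iSup₂_le fun f hf => (lintegral_mono_ae ?_).trans (X.lintegral_mul_le_dualN hf g₂)
  filter_upwards [h] with x hx
  rw [abs_mul, abs_mul]
  gcongr

theorem dualN_le_of_forall_measurable {ψ : Ω → ℝ} (hψ : Measurable ψ) {B : ℝ≥0∞}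
    (h : ∀ g : Ω → ℝ, Measurable g → X.N g ≤ 1 → ∫⁻ x, ENNReal.ofReal |g x * ψ x| ∂μ ≤ B) :
    X.dualN ψ ≤ B := by
  refine iSup₂_le fun f hf => ?_
  obtain ⟨G, hGm, hGle, hGeq⟩ :=
    exists_measurable_le_lintegral_eq μ (fun x => ENNReal.ofReal |f x * ψ x|)
  have hGf : ∀ x, (G x).toReal ≤ |f x| * |ψ x| := fun x =>
    abs_mul (f x) (ψ x) ▸ ENNReal.toReal_le_of_le_ofReal (abs_nonneg _) (hGle x)
  set g : Ω → ℝ := fun x => (G x).toReal / |ψ x|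
  have hgf : ∀ x, |g x| ≤ |f x| := fun x => by
    rw [abs_div, abs_abs, abs_of_nonneg ENNReal.toReal_nonneg]
    exact div_le_of_le_mul₀ (abs_nonneg _) (abs_nonneg _) (hGf x)
  have hgψ : ∀ x, ENNReal.ofReal |g x * ψ x| = G x := fun x => by
    rcases eq_or_ne (ψ x) 0 with hx | hx
    · have : G x = 0 := le_antisymm (by simpa [hx] using hGle x) zero_le
      simp [hx, this]
    · rw [abs_mul, abs_div, abs_abs, abs_of_nonneg ENNReal.toReal_nonneg,
        div_mul_cancel₀ _ (abs_ne_zero.2 hx),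
        ENNReal.ofReal_toReal ((hGle x).trans_lt ENNReal.ofReal_lt_top).ne]
  rw [hGeq, ← lintegral_congr hgψ]
  exact h g (hGm.ennreal_toReal.div hψ.abs)
    ((X.ideal f g (ae_of_all _ hgf)).trans hf)

theorem ae_eq_zero_of_dualN_eq_zero {g : Ω → ℝ} (hg : AEMeasurable g μ) (h : X.dualN g = 0) :
    g =ᵐ[μ] 0 := by
  by_contra hne
  set A := {x | hg.mk g x ≠ 0}
  have hA : MeasurableSet A := hg.measurable_mk (measurableSet_singleton 0).compl
  have hA0 : 0 < μ A := by
    refine pos_iff_ne_zero.2 fun hA0 => hne ?_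
    filter_upwards [hg.ae_eq_mk, measure_eq_zero_iff_ae_notMem.1 hA0] with x hx hxA
    simpa [A, hx] using hxA
  obtain ⟨G, hGA, hG, hG0, hGtop⟩ := X.saturated A hA hA0
  obtain ⟨c, hc, hcG⟩ := X.exists_pos_N_smul_le_one hGtop.ne
  have hint : ∫⁻ x, ENNReal.ofReal |(c • G.indicator 1) x * g x| ∂μ = 0 :=
    le_antisymm (h ▸ X.lintegral_mul_le_dualN hcG g) zero_le
  rw [lintegral_eq_zero_iff' (by fun_prop)] at hint
  refine hG0.ne' (measure_eq_zero_iff_ae_notMem.2 ?_)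
  filter_upwards [hint, hg.ae_eq_mk] with x hx hmk hxG
  exact hGA hxG (by simpa [Set.indicator_of_mem hxG, hc.ne', hmk] using hx)

theorem lintegral_mul_le_N_mul_dualN {F G : Ω → ℝ} (hF : AEStronglyMeasurable F μ)
    (hG : AEMeasurable G μ) :
    ∫⁻ x, ENNReal.ofReal |F x * G x| ∂μ ≤ X.N F * X.dualN G := by
  by_cases hzero : X.N F = 0 ∨ X.dualN G = 0
  · have hFG : ∀ᵐ x ∂μ, ENNReal.ofReal |F x * G x| = 0 := by
      rcases hzero with h | h
      · filter_upwards [(X.eq_zero_iff F hF).1 h] with x hx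
        simp [hx]
      · filter_upwards [X.ae_eq_zero_of_dualN_eq_zero hG h] with x hx
        simp [hx]
    rw [lintegral_congr_ae hFG, lintegral_zero]
    exact zero_le
  obtain ⟨hF0, hG0⟩ := not_or.1 hzero
  rcases eq_or_ne (X.N F) ⊤ with htop | htop
  · simp [htop, hG0]
  have hscaled := X.lintegral_mul_le_dualN (X.N_inv_toReal_smul_self hF0 htop).le G
  have hpos : 0 ≤ (X.N F).toReal⁻¹ := inv_nonneg.2 ENNReal.toReal_nonneg
  simp_rw [Pi.smul_apply, smul_eq_mul, mul_assoc, abs_mul, abs_of_nonneg hpos,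
    ENNReal.ofReal_mul hpos, lintegral_const_mul' _ _ ENNReal.ofReal_ne_top,
    ENNReal.ofReal_inv_of_pos (ENNReal.toReal_pos hF0 htop), ENNReal.ofReal_toReal htop,
    ← abs_mul] at hscaled
  exact (ENNReal.inv_mul_le_iff hF0 htop).1 hscaled

theorem convex_setOf_N_le_one {p : ℝ≥0∞} : Convex ℝ {g : Lp ℝ p μ | X.N g ≤ 1} := by
  intro g₁ hg₁ g₂ hg₂ a b ha hb hab
  have hcoe : ⇑(a • g₁ + b • g₂) =ᵐ[μ] a • ⇑g₁ + b • ⇑g₂ := by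
    filter_upwards [Lp.coeFn_add (a • g₁) (b • g₂), Lp.coeFn_smul a g₁,
      Lp.coeFn_smul b g₂] with x h₁ h₂ h₃
    simp only [Pi.add_apply] at h₁ ⊢
    rw [h₁, h₂, h₃]
  calc X.N ⇑(a • g₁ + b • g₂) = X.N (a • ⇑g₁ + b • ⇑g₂) := X.congr _ _ hcoe
    _ ≤ ENNReal.ofReal a * X.N ⇑g₁ + ENNReal.ofReal b * X.N ⇑g₂ := by
      simpa [X.smul_eq, abs_of_nonneg ha, abs_of_nonneg hb] using X.add_le (a • ⇑g₁) (b • ⇑g₂)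
    _ ≤ ENNReal.ofReal a * 1 + ENNReal.ofReal b * 1 := by gcongr <;> assumption
    _ = 1 := by rw [mul_one, mul_one, ← ENNReal.ofReal_add ha hb, hab, ENNReal.ofReal_one]

theorem isClosed_setOf_N_le_one {p : ℝ≥0∞} [Fact (1 ≤ p)] :
    IsClosed {g : Lp ℝ p μ | X.N g ≤ 1} := by
  refine IsSeqClosed.isClosed fun g g₀ hg hlim => ?_
  obtain ⟨ns, -, hae⟩ := (tendstoInMeasure_of_tendsto_Lp hlim).exists_seq_tendsto_ae
  exact (X.fatou _ _ hae).trans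
    (Filter.liminf_le_of_frequently_le' (Filter.Frequently.of_forall fun i => hg (ns i)))

theorem exists_separating_of_one_lt_N {k : Ω → ℝ} (hk : MemLp k 2 μ) (hk1 : 1 < X.N k) :
    ∃ φ : Ω → ℝ, Measurable φ ∧ MemLp φ 2 μ ∧
      (∀ g, MemLp g 2 μ → X.N g ≤ 1 → ∫ x, g x * φ x ∂μ < 1) ∧ 1 < ∫ x, k x * φ x ∂μ := by
  have hkS : hk.toLp k ∉ {g : Lp ℝ 2 μ | X.N g ≤ 1} := by
    simpa [X.congr _ _ hk.coeFn_toLp] using hk1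
  obtain ⟨ℓ, u, hℓS, hℓk⟩ :=
    geometric_hahn_banach_closed_point X.convex_setOf_N_le_one X.isClosed_setOf_N_le_one hkS
  have hu : 0 < u := by
    simpa using hℓS 0 (by
      change X.N ⇑(0 : Lp ℝ 2 μ) ≤ 1
      rw [X.congr _ _ (Lp.coeFn_zero ℝ 2 μ), X.N_zero]
      exact zero_le_one)
  set φ₀ := (InnerProductSpace.toDual ℝ (Lp ℝ 2 μ)).symm ℓ
  have hℓ : ∀ g (hg : MemLp g 2 μ), ℓ (hg.toLp g) = ∫ x, g x * φ₀ x ∂μ := by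
    intro g hg
    rw [← InnerProductSpace.toDual_symm_apply, L2.inner_def]
    refine integral_congr_ae ?_
    filter_upwards [hg.coeFn_toLp] with x hx
    simp [hx, φ₀]
  have hscale : ∀ g : Ω → ℝ, ∫ x, g x * (u⁻¹ • ⇑φ₀) x ∂μ = u⁻¹ * ∫ x, g x * φ₀ x ∂μ := by
    intro g
    simp_rw [Pi.smul_apply, smul_eq_mul, mul_left_comm _ u⁻¹, integral_const_mul]
  refine ⟨u⁻¹ • ⇑φ₀, (Lp.stronglyMeasurable φ₀).measurable.const_smul _,
    (Lp.memLp φ₀).const_smul _, fun g hg hg1 => ?_, ?_⟩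
  · have := hℓS _ (show hg.toLp g ∈ {g : Lp ℝ 2 μ | X.N g ≤ 1} by
      simpa [X.congr _ _ hg.coeFn_toLp] using hg1)
    rw [hscale, inv_mul_lt_one₀ hu, ← hℓ g hg]
    exact this
  · rw [hscale, one_lt_inv_mul₀ hu, ← hℓ k hk]
    exact hℓk

theorem setLIntegral_mul_le_one_of_forall_integral_mul_le_one {φ : Ω → ℝ} (hφm : Measurable φ)
    (hφ : MemLp φ 2 μ) (h : ∀ g, MemLp g 2 μ → X.N g ≤ 1 → ∫ x, g x * φ x ∂μ ≤ 1)
    {g : Ω → ℝ} (hg : Measurable g) (hg1 : X.N g ≤ 1) {B : Set Ω} (hB : MeasurableSet B)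
    (hBfin : μ B ≠ ⊤) {C : ℝ} (hgC : ∀ x ∈ B, |g x| ≤ C) :
    ∫⁻ x in B, ENNReal.ofReal |g x * φ x| ∂μ ≤ 1 := by
  set sgn : Ω → ℝ := fun x => φ x / |φ x|
  set g' := B.indicator fun x => |g x| * sgn x
  have hg'_le : ∀ x, |g' x| ≤ |g x| := fun x => by
    by_cases hx : x ∈ B
    · have : |sgn x| ≤ 1 := by simpa [sgn, abs_div] using div_self_le_one |φ x|
      simpa [g', hx, abs_mul] using mul_le_of_le_one_right (abs_nonneg (g x)) this
    · simp [g', hx]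
  have hg' : MemLp g' 2 μ := by
    refine (memLp_top_of_bound (C := max C 0) ((hg.abs.mul (hφm.div hφm.abs)).indicator
      hB).aestronglyMeasurable (ae_of_all _ fun x => ?_)).mono_exponent_of_measure_support_ne_top
      (fun x hx => Set.indicator_of_notMem hx _) hBfin le_top
    by_cases hx : x ∈ B
    · exact (Real.norm_eq_abs _).trans_le
        (((hg'_le x).trans (hgC x hx)).trans (le_max_left _ _))
    · simp [hx]
  have hg'φ : ∀ x, g' x * φ x = B.indicator (fun x => |g x * φ x|) x := fun x => by
    by_cases hx : x ∈ B
    · rcases eq_or_ne (φ x) 0 with h0 | h0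
      · simp [g', hx, h0]
      · simp only [g', sgn, Set.indicator_of_mem hx, abs_mul]
        field_simp
        rw [sq_abs]
    · simp [g', hx]
  rw [← lintegral_indicator hB]
  calc ∫⁻ x, B.indicator (fun x => ENNReal.ofReal |g x * φ x|) x ∂μ
      = ∫⁻ x, ENNReal.ofReal (g' x * φ x) ∂μ := lintegral_congr fun x => by
        by_cases hx : x ∈ B <;> simp [hg'φ, hx]
    _ = ENNReal.ofReal (∫ x, g' x * φ x ∂μ) :=
      (ofReal_integral_eq_lintegral_ofReal (hg'.integrable_mul hφ)
        (ae_of_all _ fun x => show 0 ≤ g' x * φ x from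
          (hg'φ x).symm ▸ Set.indicator_nonneg (fun _ _ => abs_nonneg _) x)).symm
    _ ≤ 1 := ENNReal.ofReal_le_one.2 (h g' hg' ((X.ideal _ _ (ae_of_all _ hg'_le)).trans hg1))

theorem dualN_le_one_of_forall_integral_mul_le_one {φ : Ω → ℝ} (hφm : Measurable φ)
    (hφ : MemLp φ 2 μ) (h : ∀ g, MemLp g 2 μ → X.N g ≤ 1 → ∫ x, g x * φ x ∂μ ≤ 1) :
    X.dualN φ ≤ 1 := by
  refine X.dualN_le_of_forall_measurable hφm fun g hg hg1 => ?_
  set B : ℕ → Set Ω := fun n => {x | |g x| ≤ n ∧ ((n : ℝ) + 1)⁻¹ ≤ |φ x|}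
  have hBm : ∀ n, MeasurableSet (B n) := fun n =>
    (measurableSet_le hg.abs measurable_const).inter (measurableSet_le measurable_const hφm.abs)
  have hBfin : ∀ n, μ (B n) ≠ ⊤ := fun n => by
    refine (measure_mono fun x hx => ?_).trans_lt (hφ.meas_ge_lt_top_enorm two_ne_zero
      ENNReal.ofNat_ne_top (ε := Real.toNNReal ((n : ℝ) + 1)⁻¹) (by simp; positivity)) |>.ne
    rw [Set.mem_ofPred_eq, Real.enorm_eq_ofReal_abs]
    exact ENNReal.ofReal_le_ofReal hx.2
  have hBmono : Monotone B := fun m n hmn x hx => by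
    have : (m : ℝ) ≤ n := Nat.cast_le.2 hmn
    exact ⟨hx.1.trans this, le_trans (by gcongr) hx.2⟩
  have hBunion : Function.support (fun x => ENNReal.ofReal |g x * φ x|) ⊆ ⋃ n, B n := by
    intro x hx
    have hφx : φ x ≠ 0 := fun h0 => hx (by simp [h0])
    obtain ⟨n, hn⟩ := exists_nat_gt (max |g x| (|φ x|)⁻¹)
    refine Set.mem_iUnion.2 ⟨n, (le_max_left _ _).trans hn.le, ?_⟩
    rw [inv_le_comm₀ (by positivity) (abs_pos.2 hφx)]
    linarith [le_max_right |g x| (|φ x|)⁻¹]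
  calc ∫⁻ x, ENNReal.ofReal |g x * φ x| ∂μ
      = ∫⁻ x in ⋃ n, B n, ENNReal.ofReal |g x * φ x| ∂μ :=
        (setLIntegral_eq_of_support_subset hBunion).symm
    _ = ⨆ n, ∫⁻ x in B n, ENNReal.ofReal |g x * φ x| ∂μ :=
        setLIntegral_iUnion_of_directed _ hBmono.directed_le
    _ ≤ 1 := iSup_le fun n => X.setLIntegral_mul_le_one_of_forall_integral_mul_le_one hφm hφ h
      hg hg1 (hBm n) (hBfin n) fun x hx => hx.1

/-- Lorentz–Luxemburg `X'' = X`, for `k ∈ L²`. -/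
theorem N_le_of_memLp {k : Ω → ℝ} (hk : MemLp k 2 μ) {M : ℝ≥0∞}
    (hM : ∀ ψ : Ω → ℝ, Measurable ψ → X.dualN ψ ≤ 1 →
      ∫⁻ x, ENNReal.ofReal |k x * ψ x| ∂μ ≤ M) :
    X.N k ≤ M := by
  by_contra! hlt
  obtain ⟨t, -, hMt, htk⟩ := ENNReal.lt_iff_exists_real_btwn.1 hlt
  have ht : 0 < t := ENNReal.ofReal_pos.1 (zero_le.trans_lt hMt)
  have hk1 : 1 < X.N (t⁻¹ • k) := by
    rwa [X.smul_eq, abs_of_pos (inv_pos.2 ht), ENNReal.ofReal_inv_of_pos ht,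
      ← ENNReal.div_eq_inv_mul, ENNReal.lt_div_iff_mul_lt (Or.inl (ENNReal.ofReal_pos.2 ht).ne')
        (Or.inl ENNReal.ofReal_ne_top), one_mul]
  obtain ⟨φ, hφm, hφ, hφS, hkφ⟩ := X.exists_separating_of_one_lt_N (hk.const_smul t⁻¹) hk1
  have hφ1 := X.dualN_le_one_of_forall_integral_mul_le_one hφm hφ fun g hg hg1 =>
    (hφS g hg hg1).le
  simp_rw [Pi.smul_apply, smul_eq_mul, mul_assoc, integral_const_mul, one_lt_inv_mul₀ ht] at hkφ
  refine (hM φ hφm hφ1).not_gt (hMt.trans_le ?_)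
  calc ENNReal.ofReal t ≤ ‖∫ x, k x * φ x ∂μ‖ₑ := by
        rw [Real.enorm_eq_ofReal_abs]
        exact ENNReal.ofReal_le_ofReal (hkφ.le.trans (le_abs_self _))
    _ ≤ ∫⁻ x, ‖k x * φ x‖ₑ ∂μ := enorm_integral_le_lintegral_enorm _
    _ = ∫⁻ x, ENNReal.ofReal |k x * φ x| ∂μ := by simp_rw [Real.enorm_eq_ofReal_abs]

theorem N_le_of_forall_lintegral_mul_le {k : Ω → ℝ} (hk : AEStronglyMeasurable k μ)
    {F : Set Ω} (hF : μ F ≠ ⊤) (hkF : ∀ x ∉ F, k x = 0) {M : ℝ≥0∞}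
    (hM : ∀ ψ : Ω → ℝ, Measurable ψ → X.dualN ψ ≤ 1 →
      ∫⁻ x, ENNReal.ofReal |k x * ψ x| ∂μ ≤ M) :
    X.N k ≤ M := by
  set kn : ℕ → Ω → ℝ := fun n x => max (-n) (min (k x) n)
  have hkn_le : ∀ n x, |kn n x| ≤ |k x| := fun n x => by
    simp only [kn, abs_le]
    constructor <;> cases abs_cases (k x) <;> grind
  have hkn_bdd : ∀ n x, ‖kn n x‖ ≤ n := fun n x => by
    simp only [kn, Real.norm_eq_abs, abs_le]
    constructor <;> grind
  have hkn : ∀ n, MemLp (kn n) 2 μ := fun n =>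
    (memLp_top_of_bound (by fun_prop) n (ae_of_all _ (hkn_bdd n)))
      |>.mono_exponent_of_measure_support_ne_top (fun x hx => by simp [kn, hkF x hx]) hF le_top
  have hkn_lim : ∀ x, Filter.Tendsto (fun n => kn n x) Filter.atTop (nhds (k x)) := fun x => by
    obtain ⟨n₀, hn₀⟩ := exists_nat_ge |k x|
    refine tendsto_atTop_of_eventually_const (i₀ := n₀) fun n hn => ?_
    have : |k x| ≤ n := hn₀.trans (Nat.cast_le.2 hn)
    simp only [kn]
    rw [min_eq_left (le_of_abs_le this), max_eq_right (neg_le_of_abs_le this)]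
  refine (X.fatou kn k (ae_of_all _ hkn_lim)).trans
    (Filter.liminf_le_of_frequently_le' (Filter.Frequently.of_forall fun n => ?_))
  refine X.N_le_of_memLp (hkn n) fun ψ hψ hψ1 => (lintegral_mono fun x => ?_).trans (hM ψ hψ hψ1)
  rw [abs_mul, abs_mul]
  exact ENNReal.ofReal_le_ofReal (mul_le_mul_of_nonneg_right (hkn_le n x) (abs_nonneg _))

end BFSpace

theorem MeasureTheory.AEStronglyMeasurable.clm_apply {Ω : Type*} [MeasurableSpace Ω]
    {μ : Measure Ω} {V : Type*} [NormedAddCommGroup V] [NormedSpace ℝ V]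
    {W : Ω → V →L[ℝ] V} (hW : AEStronglyMeasurable W μ) {v : Ω → V}
    (hv : AEStronglyMeasurable v μ) : AEStronglyMeasurable (fun x => W x (v x)) μ :=
  isBoundedBilinearMap_apply.continuous.comp_aestronglyMeasurable (hW.prodMk hv)

theorem lintegral_norm_avg_mul_norm_avg_le {Ω : Type*} [MeasurableSpace Ω] {μ : Measure Ω}
    {V : Type*} [NormedAddCommGroup V] [NormedSpace ℝ V] (X : BFSpace Ω μ)
    {W Winv : Ω → V →L[ℝ] V} (hWm : AEStronglyMeasurable W μ)
    (hWim : AEStronglyMeasurable Winv μ) {E : Set Ω} (hE : MeasurableSet E) {C₁ C₂ : ℝ≥0∞}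
    (h₁ : ∀ f : Ω → V, AEStronglyMeasurable f μ → X.wN W (avgOp μ E f) ≤ C₁ * X.wN W f)
    (h₂ : ∀ g : Ω → V, AEStronglyMeasurable g μ →
      X.dualN (fun x => ‖Winv x (avgOp μ E g x)‖) ≤ C₂ * X.dualN (fun x => ‖Winv x (g x)‖))
    {f g : Ω → V} (hf : AEStronglyMeasurable f μ) (hg : AEStronglyMeasurable g μ) :
    ∫⁻ x in E, ENNReal.ofReal ‖W x ((μ E).toReal⁻¹ • ∫ y in E, f y ∂μ)‖ *
        ENNReal.ofReal ‖Winv x ((μ E).toReal⁻¹ • ∫ y in E, g y ∂μ)‖ ∂μ ≤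
      C₁ * C₂ * (X.wN W f * X.dualN (fun x => ‖Winv x (g x)‖)) := by
  have havg : ∀ h : Ω → V, AEStronglyMeasurable (avgOp μ E h) μ := fun h =>
    (stronglyMeasurable_const.indicator hE).aestronglyMeasurable
  calc ∫⁻ x in E, ENNReal.ofReal ‖W x ((μ E).toReal⁻¹ • ∫ y in E, f y ∂μ)‖ *
        ENNReal.ofReal ‖Winv x ((μ E).toReal⁻¹ • ∫ y in E, g y ∂μ)‖ ∂μ
      = ∫⁻ x, ENNReal.ofReal |‖W x (avgOp μ E f x)‖ * ‖Winv x (avgOp μ E g x)‖| ∂μ := by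
        rw [← lintegral_indicator hE]
        refine lintegral_congr fun x => ?_
        by_cases hx : x ∈ E <;>
          simp [avgOp, hx, abs_mul, ENNReal.ofReal_mul]
    _ ≤ X.wN W (avgOp μ E f) * X.dualN (fun x => ‖Winv x (avgOp μ E g x)‖) :=
      X.lintegral_mul_le_N_mul_dualN (hWm.clm_apply (havg f)).norm
        (hWim.clm_apply (havg g)).norm.aemeasurable
    _ ≤ C₁ * X.wN W f * (C₂ * X.dualN (fun x => ‖Winv x (g x)‖)) :=
      mul_le_mul' (h₁ f hf) (h₂ g hg)
    _ = C₁ * C₂ * (X.wN W f * X.dualN (fun x => ‖Winv x (g x)‖)) := by ring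

section Weights

variable {V : Type*} [NormedAddCommGroup V] [InnerProductSpace ℝ V]

theorem inner_le_norm_apply_mul_norm_apply {A B : V →L[ℝ] V}
    (hA : ∀ u v, ⟪A u, v⟫ = ⟪u, A v⟫) (hAB : A.comp B = ContinuousLinearMap.id ℝ V) (a b : V) :
    ⟪a, b⟫ ≤ ‖A a‖ * ‖B b‖ :=
  calc ⟪a, b⟫ = ⟪A a, B b⟫ := by
        rw [hA, ← ContinuousLinearMap.comp_apply, hAB, ContinuousLinearMap.id_apply]
    _ ≤ ‖A a‖ * ‖B b‖ := real_inner_le_norm _ _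

theorem norm_apply_div_norm_smul_apply_apply_le {A B : V →L[ℝ] V}
    (hBA : B.comp A = ContinuousLinearMap.id ℝ V) {c : ℝ} (hc : 0 ≤ c) (a : V) :
    ‖B ((c / ‖A a‖) • A (A a))‖ ≤ c := by
  rw [map_smul, ← ContinuousLinearMap.comp_apply, hBA, ContinuousLinearMap.id_apply, norm_smul,
    Real.norm_eq_abs, abs_div, abs_of_nonneg hc, abs_norm]
  rcases eq_or_ne ‖A a‖ 0 with h | h
  · simp [h, hc]
  · rw [div_mul_cancel₀ _ h]

theorem inner_div_norm_smul_apply_apply {A : V →L[ℝ] V} (hA : ∀ u v, ⟪A u, v⟫ = ⟪u, A v⟫)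
    (c : ℝ) (a : V) : ⟪a, (c / ‖A a‖) • A (A a)⟫ = c * ‖A a‖ := by
  rw [real_inner_smul_right, ← hA, real_inner_self_eq_norm_sq]
  rcases eq_or_ne ‖A a‖ 0 with h | h
  · simp [h]
  · field_simp

variable [CompleteSpace V] {Ω : Type*} [MeasurableSpace Ω] {μ : Measure Ω}
  {W Winv : Ω → V →L[ℝ] V} {E : Set Ω}

theorem ofReal_setIntegral_inner_le_lintegral
    (hsa : ∀ᵐ x ∂μ, ∀ u v : V, ⟪W x u, v⟫ = ⟪u, W x v⟫)
    (hinv : ∀ᵐ x ∂μ, (W x).comp (Winv x) = ContinuousLinearMap.id ℝ V)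
    (hE0 : μ E ≠ 0) (hEfin : μ E ≠ ⊤) (a : V) {g : Ω → V} (hg : IntegrableOn g E μ) :
    ENNReal.ofReal (∫ y in E, ⟪a, g y⟫ ∂μ) ≤
      ∫⁻ x in E, ENNReal.ofReal ‖W x a‖ *
        ENNReal.ofReal ‖Winv x ((μ E).toReal⁻¹ • ∫ y in E, g y ∂μ)‖ ∂μ := by
  set b := (μ E).toReal⁻¹ • ∫ y in E, g y ∂μ
  have hb : ∫ y in E, ⟪a, g y⟫ ∂μ = (μ E).toReal * ⟪a, b⟫ := by
    rw [integral_inner hg, real_inner_smul_right,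
      mul_inv_cancel_left₀ (ENNReal.toReal_pos hE0 hEfin).ne']
  calc ENNReal.ofReal (∫ y in E, ⟪a, g y⟫ ∂μ) = ∫⁻ x in E, ENNReal.ofReal ⟪a, b⟫ ∂μ := by
        rw [hb, setLIntegral_const, ENNReal.ofReal_mul ENNReal.toReal_nonneg,
          ENNReal.ofReal_toReal hEfin, mul_comm]
    _ ≤ _ := by
      refine lintegral_mono_ae (ae_restrict_of_ae ?_)
      filter_upwards [hsa, hinv] with x hsa hinv
      rw [← ENNReal.ofReal_mul (norm_nonneg _)]
      exact ENNReal.ofReal_le_ofReal (inner_le_norm_apply_mul_norm_apply hsa hinv a b)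

theorem setLIntegral_abs_mul_norm_le_of_bilinear (X : BFSpace Ω μ) (hWm : AEStronglyMeasurable W μ)
    (hsa : ∀ᵐ x ∂μ, ∀ u v : V, ⟪W x u, v⟫ = ⟪u, W x v⟫)
    (hinv : ∀ᵐ x ∂μ, (Winv x).comp (W x) = ContinuousLinearMap.id ℝ V ∧
      (W x).comp (Winv x) = ContinuousLinearMap.id ℝ V)
    (hE0 : μ E ≠ 0) (hEfin : μ E ≠ ⊤) (a : V) {K : ℝ≥0∞}
    (hbil : ∀ g : Ω → V, AEStronglyMeasurable g μ →
      ∫⁻ x in E, ENNReal.ofReal ‖W x a‖ *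
          ENNReal.ofReal ‖Winv x ((μ E).toReal⁻¹ • ∫ y in E, g y ∂μ)‖ ∂μ ≤
        K * X.dualN (fun x => ‖Winv x (g x)‖))
    {ψ : Ω → ℝ} (hψ : Measurable ψ) (hψ1 : X.dualN ψ ≤ 1) :
    ∫⁻ x in E, ENNReal.ofReal (|ψ x| * ‖W x a‖) ∂μ ≤ K := by
  obtain ⟨v, hvm, hv⟩ : AEStronglyMeasurable (fun x => (|ψ x| / ‖W x a‖) • W x (W x a)) μ :=
    (hψ.abs.aemeasurable.div (hWm.clm_apply aestronglyMeasurable_const).norm.aemeasurable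
      ).aestronglyMeasurable.smul (hWm.clm_apply (hWm.clm_apply aestronglyMeasurable_const))
  have hv_inner : ∀ᵐ x ∂μ, ⟪a, v x⟫ = |ψ x| * ‖W x a‖ := by
    filter_upwards [hv, hsa] with x hx hsa
    rw [← hx, inner_div_norm_smul_apply_apply hsa]
  have hv_norm : ∀ᵐ x ∂μ, ‖Winv x (v x)‖ ≤ |ψ x| := by
    filter_upwards [hv, hinv] with x hx hinv
    rw [← hx]
    exact norm_apply_div_norm_smul_apply_apply_le hinv.1 (abs_nonneg _) a
  set En : ℕ → Set Ω := fun n => {x | ‖v x‖ ≤ n}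
  have hEn : ∀ n, MeasurableSet (En n) := fun n =>
    measurableSet_le hvm.norm.measurable measurable_const
  have hEn_mono : Monotone fun n => En n ∩ E := fun m n hmn x hx =>
    ⟨(show ‖v x‖ ≤ m from hx.1).trans (Nat.cast_le.2 hmn), hx.2⟩
  have hEn_union : ⋃ n, En n ∩ E = E := by
    refine Set.Subset.antisymm (Set.iUnion_subset fun n => Set.inter_subset_right) fun x hx => ?_
    obtain ⟨n, hn⟩ := exists_nat_ge ‖v x‖
    exact Set.mem_iUnion.2 ⟨n, hn, hx⟩
  have hbound : ∀ n, ∫⁻ x in En n ∩ E, ENNReal.ofReal (|ψ x| * ‖W x a‖) ∂μ ≤ K := by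
    intro n
    set gn := (En n).indicator v
    have hgn : AEStronglyMeasurable gn μ :=
      (hvm.indicator (hEn n)).aestronglyMeasurable
    have hgn_int : IntegrableOn gn E μ := Measure.integrableOn_of_bounded hEfin hgn
      (M := n) (ae_of_all _ fun x => by
        by_cases hx : x ∈ En n
        · simp only [gn, Set.indicator_of_mem hx]
          exact hx
        · simp [gn, hx])
    have hgn_inner : ∀ᵐ x ∂μ, ENNReal.ofReal ⟪a, gn x⟫ =
        (En n).indicator (fun x => ENNReal.ofReal (|ψ x| * ‖W x a‖)) x := by
      filter_upwards [hv_inner] with x hx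
      by_cases hxn : x ∈ En n <;> simp [gn, hxn, hx]
    have hgn_dual : X.dualN (fun x => ‖Winv x (gn x)‖) ≤ 1 := by
      refine (X.dualN_mono ?_).trans hψ1
      filter_upwards [hv_norm] with x hx
      by_cases hxn : x ∈ En n <;> simp [gn, hxn, hx]
    calc ∫⁻ x in En n ∩ E, ENNReal.ofReal (|ψ x| * ‖W x a‖) ∂μ
        = ∫⁻ x in E, ENNReal.ofReal ⟪a, gn x⟫ ∂μ := by
          rw [← setLIntegral_indicator (hEn n)]
          exact (lintegral_congr_ae (ae_restrict_of_ae hgn_inner)).symm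
      _ = ENNReal.ofReal (∫ x in E, ⟪a, gn x⟫ ∂μ) := by
          refine (ofReal_integral_eq_lintegral_ofReal (hgn_int.const_inner a)
            (ae_restrict_of_ae ?_)).symm
          filter_upwards [hv_inner] with x hx
          by_cases hxn : x ∈ En n <;> simp [gn, hxn, hx]
          positivity
      _ ≤ _ := ofReal_setIntegral_inner_le_lintegral hsa (hinv.mono fun x h => h.2) hE0 hEfin a
          hgn_int
      _ ≤ K * X.dualN (fun x => ‖Winv x (gn x)‖) := hbil gn hgn
      _ ≤ K := by simpa using mul_le_mul_right hgn_dual K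
  rw [← hEn_union, setLIntegral_iUnion_of_directed _ hEn_mono.directed_le]
  exact iSup_le hbound

theorem wN_avgOp_le_of_bilinear (X : BFSpace Ω μ) (hWm : AEStronglyMeasurable W μ)
    (hsa : ∀ᵐ x ∂μ, ∀ u v : V, ⟪W x u, v⟫ = ⟪u, W x v⟫)
    (hinv : ∀ᵐ x ∂μ, (Winv x).comp (W x) = ContinuousLinearMap.id ℝ V ∧
      (W x).comp (Winv x) = ContinuousLinearMap.id ℝ V)
    (hE : MeasurableSet E) (hE0 : μ E ≠ 0) (hEfin : μ E ≠ ⊤) {C : ℝ≥0∞}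
    (hbil : ∀ (f g : Ω → V), AEStronglyMeasurable f μ → AEStronglyMeasurable g μ →
      ∫⁻ x in E, ENNReal.ofReal ‖W x ((μ E).toReal⁻¹ • ∫ y in E, f y ∂μ)‖ *
          ENNReal.ofReal ‖Winv x ((μ E).toReal⁻¹ • ∫ y in E, g y ∂μ)‖ ∂μ ≤
        C * (X.wN W f * X.dualN (fun x => ‖Winv x (g x)‖)))
    {f : Ω → V} (hf : AEStronglyMeasurable f μ) :
    X.wN W (avgOp μ E f) ≤ C * X.wN W f := by
  refine X.N_le_of_forall_lintegral_mul_le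
    (hWm.clm_apply (stronglyMeasurable_const.indicator hE).aestronglyMeasurable).norm hEfin
    (fun x hx => by simp [hx]) fun ψ hψ hψ1 => ?_
  calc ∫⁻ x, ENNReal.ofReal |‖W x (avgOp μ E f x)‖ * ψ x| ∂μ
      = ∫⁻ x in E, ENNReal.ofReal (|ψ x| * ‖W x ((μ E).toReal⁻¹ • ∫ y in E, f y ∂μ)‖) ∂μ := by
        rw [← lintegral_indicator hE]
        refine lintegral_congr fun x => ?_
        by_cases hx : x ∈ E <;> simp [avgOp, hx, abs_mul, mul_comm]
    _ ≤ C * X.wN W f :=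
      setLIntegral_abs_mul_norm_le_of_bilinear X hWm hsa hinv hE0 hEfin _
        (fun g hg => (hbil f g hf hg).trans_eq (mul_assoc _ _ _).symm) hψ hψ1

end Weights

theorem averaging_bilinear_characterization_general
    {Ω : Type*} [MeasurableSpace Ω] (μ : Measure Ω)
    {V : Type*} [NormedAddCommGroup V] [InnerProductSpace ℝ V] [FiniteDimensional ℝ V]
    (X : BFSpace Ω μ)
    (W Winv : Ω → V →L[ℝ] V)
    (hWm : AEStronglyMeasurable W μ) (hWim : AEStronglyMeasurable Winv μ)
    (hsa : ∀ᵐ x ∂μ, ∀ u v : V, ⟪W x u, v⟫ = ⟪u, W x v⟫)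
    (hinv : ∀ᵐ x ∂μ, (Winv x).comp (W x) = ContinuousLinearMap.id ℝ V ∧
      (W x).comp (Winv x) = ContinuousLinearMap.id ℝ V)
    (E : Set Ω) (hE : MeasurableSet E) (h0 : 0 < μ E) (hfin : μ E < ⊤) :
    -- direct implication: boundedness on `X_W` and on `(X')_{W⁻¹}` gives the bilinear bound
    (∀ C₁ C₂ : ℝ≥0∞,
      (∀ f : Ω → V, AEStronglyMeasurable f μ → X.wN W (avgOp μ E f) ≤ C₁ * X.wN W f) →
      (∀ g : Ω → V, AEStronglyMeasurable g μ →
        X.dualN (fun x => ‖Winv x (avgOp μ E g x)‖) ≤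
          C₂ * X.dualN (fun x => ‖Winv x (g x)‖)) →
      ∀ (f g : Ω → V), AEStronglyMeasurable f μ → AEStronglyMeasurable g μ →
        (∫⁻ x in E, ENNReal.ofReal ‖W x ((μ E).toReal⁻¹ • ∫ y in E, f y ∂μ)‖ *
            ENNReal.ofReal ‖Winv x ((μ E).toReal⁻¹ • ∫ y in E, g y ∂μ)‖ ∂μ) ≤
          C₁ * C₂ * (X.wN W f * X.dualN (fun x => ‖Winv x (g x)‖))) ∧
    -- converse: the bilinear bound gives boundedness on `X_W`
    (∀ C : ℝ≥0∞,
      (∀ (f g : Ω → V), AEStronglyMeasurable f μ → AEStronglyMeasurable g μ →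
        (∫⁻ x in E, ENNReal.ofReal ‖W x ((μ E).toReal⁻¹ • ∫ y in E, f y ∂μ)‖ *
            ENNReal.ofReal ‖Winv x ((μ E).toReal⁻¹ • ∫ y in E, g y ∂μ)‖ ∂μ) ≤
          C * (X.wN W f * X.dualN (fun x => ‖Winv x (g x)‖))) →
      ∀ f : Ω → V, AEStronglyMeasurable f μ →
        X.wN W (avgOp μ E f) ≤ C * X.wN W f) :=
  ⟨fun _ _ h₁ h₂ _ _ hf hg => lintegral_norm_avg_mul_norm_avg_le X hWm hWim hE h₁ h₂ hf hg,
    fun _ hbil _ hf => wN_avgOp_le_of_bilinear X hWm hsa hinv hE h0.ne' hfin.ne hbil hf⟩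

/-- **Bilinear characterization of boundedness of the averaging operator.**
If `T_E` is bounded on `X_W` with constant `C₁` and on `(X')_{W⁻¹}` with constant `C₂`, then the
bilinear operator `(f,g) ↦ 1_E ⟨f⟩_E ⊗ ⟨g⟩_E` maps `X_W × (X')_{W⁻¹}` into
`L¹_{W⊗W⁻¹}(Ω; V⊗V)` with constant `C₁·C₂` (the weighted tensor norm of the rank-one function
factorizing as `‖W(x)⟨f⟩_E‖·‖W(x)⁻¹⟨g⟩_E‖`). Conversely, if the bilinear operator is bounded
with constant `C`, then `T_E` is bounded on `X_W` with constant `C`. -/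
theorem averaging_bilinear_characterization
    {Ω : Type*} [MeasurableSpace Ω] (μ : Measure Ω) [SigmaFinite μ]
    {V : Type*} [NormedAddCommGroup V] [InnerProductSpace ℝ V] [FiniteDimensional ℝ V]
    (X : BFSpace Ω μ)
    (W Winv : Ω → V →L[ℝ] V)
    (hWm : AEStronglyMeasurable W μ) (hWim : AEStronglyMeasurable Winv μ)
    (hsa : ∀ᵐ x ∂μ, ∀ u v : V, ⟪W x u, v⟫ = ⟪u, W x v⟫)
    (hpos : ∀ᵐ x ∂μ, ∀ u : V, u ≠ 0 → 0 < ⟪W x u, u⟫)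
    (hinv : ∀ᵐ x ∂μ, (Winv x).comp (W x) = ContinuousLinearMap.id ℝ V ∧
      (W x).comp (Winv x) = ContinuousLinearMap.id ℝ V)
    (E : Set Ω) (hE : MeasurableSet E) (h0 : 0 < μ E) (hfin : μ E < ⊤) :
    -- direct implication: boundedness on `X_W` and on `(X')_{W⁻¹}` gives the bilinear bound
    (∀ C₁ C₂ : ℝ≥0∞,
      (∀ f : Ω → V, AEStronglyMeasurable f μ → X.wN W (avgOp μ E f) ≤ C₁ * X.wN W f) →
      (∀ g : Ω → V, AEStronglyMeasurable g μ →
        X.dualN (fun x => ‖Winv x (avgOp μ E g x)‖) ≤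
          C₂ * X.dualN (fun x => ‖Winv x (g x)‖)) →
      ∀ (f g : Ω → V), AEStronglyMeasurable f μ → AEStronglyMeasurable g μ →
        (∫⁻ x in E, ENNReal.ofReal ‖W x ((μ E).toReal⁻¹ • ∫ y in E, f y ∂μ)‖ *
            ENNReal.ofReal ‖Winv x ((μ E).toReal⁻¹ • ∫ y in E, g y ∂μ)‖ ∂μ) ≤
          C₁ * C₂ * (X.wN W f * X.dualN (fun x => ‖Winv x (g x)‖))) ∧
    -- converse: the bilinear bound gives boundedness on `X_W`
    (∀ C : ℝ≥0∞,
      (∀ (f g : Ω → V), AEStronglyMeasurable f μ → AEStronglyMeasurable g μ →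
        (∫⁻ x in E, ENNReal.ofReal ‖W x ((μ E).toReal⁻¹ • ∫ y in E, f y ∂μ)‖ *
            ENNReal.ofReal ‖Winv x ((μ E).toReal⁻¹ • ∫ y in E, g y ∂μ)‖ ∂μ) ≤
          C * (X.wN W f * X.dualN (fun x => ‖Winv x (g x)‖))) →
      ∀ f : Ω → V, AEStronglyMeasurable f μ →
        X.wN W (avgOp μ E f) ≤ C * X.wN W f) :=
  averaging_bilinear_characterization_general μ X W Winv hWm hWim hsa hinv E hE h0 hfin
end

section
/- Let p_1,…,p_m ∈ [1,∞], 1/p = Σ_j 1/p_j, and let W_j : ℝ^d → L(H_j) be matrix weights with W_j^{-1} locally p_j'-integrable. If the tensor-product Roudenko quantity [W⃗]_{p⃗,op} := sup_Q ( ⨍_Q ∏_{j=1}^m ( ⨍_Q ‖W_j(x) W_j(x_j)^{-1}‖^{p_j'} dx_j )^{p/p_j'} dx )^{1/p} is finite, then for every cube Q and all f_j ∈ L^{p_j}_{W_j}(ℝ^d; H_j), the averaging operator T_Q(f⃗) := 1_Q ⊗_{j=1}^m ⟨f_j⟩_Q satisfies ‖T_Q(f⃗)‖_{L^p_{W}(ℝ^d;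 ⊗H_j)} ≤ [W⃗]_{p⃗,op} ∏_{j=1}^m ‖f_j‖_{L^{p_j}_{W_j}}, where W := ⊗_{j=1}^m W_j. Hence [W⃗]_{p⃗} ≤ [W⃗]_{p⃗,op}. -/
open MeasureTheory ENNReal

/-- The axis-parallel cube in `ℝ^d` with corner `a` and side length `ℓ`. -/
def cube {d : ℕ} (a : Fin d → ℝ) (ℓ : ℝ) : Set (Fin d → ℝ) :=
  {x | ∀ i, a i ≤ x i ∧ x i ≤ a i + ℓ}

/-- The normalized Lebesgue measure on the cube `Q = cube a ℓ` (so that integrals against it are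
averages `⨍_Q`). -/
noncomputable def cubeAvg {d : ℕ} (a : Fin d → ℝ) (ℓ : ℝ) : Measure (Fin d → ℝ) :=
  (volume (cube a ℓ))⁻¹ • volume.restrict (cube a ℓ)

/-- The `L^t(ν)`-"norm" `(∫ g^t dν)^{1/t}` of an `ℝ≥0∞`-valued function, for `t ∈ (0,∞]`,
interpreted as the essential supremum when `t = ∞`.  Applied with `ν = cubeAvg a ℓ` this is the
average `(⨍_Q g^t)^{1/t}`. -/
noncomputable def avgLp {α : Type*} [MeasurableSpace α] (ν : Measure α) (t : ℝ≥0∞)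
    (g : α → ℝ≥0∞) : ℝ≥0∞ :=
  if t = ⊤ then essSup g ν else (∫⁻ x, g x ^ t.toReal ∂ν) ^ (1 / t.toReal)

/-! For `x ∈ Q` write `W_j(x) ⟨f_j⟩_Q = ⨍_Q (W_j(x) W_j(y)⁻¹) (W_j(y) f_j(y)) dy`. Hölder in
`y` with exponents `p_j'`, `p_j` bounds its norm by `K_j(x) · (⨍_Q |W_j f_j|^{p_j})^{1/p_j}`, where
`K_j(x)` is the inner average of the Roudenko quantity. Taking the `L^{p₀}(Q)` norm of the product
over `j` produces the Roudenko quantity times `∏_j (⨍_Q |W_j f_j|^{p_j})^{1/p_j}`, and the volume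
factor `|Q|^{1/p₀} = ∏_j |Q|^{1/p_j}` turns these averages into the global weighted norms. -/

open scoped NNReal

lemma ENNReal.rpow_finset_sum {ι : Type*} (s : Finset ι) {x : ℝ≥0∞} (hx0 : x ≠ 0) (hx : x ≠ ⊤)
    (t : ι → ℝ) : x ^ (∑ i ∈ s, t i) = ∏ i ∈ s, x ^ t i := by
  classical
  induction s using Finset.cons_induction with
  | empty => simp
  | cons i s hi ih => rw [Finset.sum_cons, Finset.prod_cons, ENNReal.rpow_add _ _ hx0 hx, ih]

section

variable {α : Type*} [MeasurableSpace α]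

lemma avgLp_eq_eLpNorm (ν : Measure α) {t : ℝ≥0∞} (ht : t ≠ 0) (g : α → ℝ≥0∞) :
    avgLp ν t g = eLpNorm g t ν := by
  unfold avgLp
  split_ifs with htop
  · simp [htop, eLpNorm_exponent_top, eLpNormEssSup]
  · simp [eLpNorm_eq_lintegral_rpow_enorm_toReal ht htop]

lemma avgLp_nnnorm_eq_eLpNorm {E : Type*} [NormedAddCommGroup E]
    (ν : Measure α) {t : ℝ≥0∞} (ht : t ≠ 0) (g : α → E) :
    avgLp ν t (fun y => (‖g y‖₊ : ℝ≥0∞)) = eLpNorm g t ν :=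
  (avgLp_eq_eLpNorm ν ht _).trans (eLpNorm_enorm g)

lemma eLpNorm_mul_const_of_aemeasurable {ν : Measure α} {g : α → ℝ≥0∞} (hg : AEMeasurable g ν)
    (c p : ℝ≥0∞) : eLpNorm (fun x => g x * c) p ν = eLpNorm g p ν * c := by
  rcases eq_or_ne p 0 with rfl | hp0
  · simp
  rcases eq_or_ne p ⊤ with rfl | hp
  · simp only [eLpNorm_exponent_top, eLpNormEssSup, enorm_eq_self]
    simpa only [mul_comm] using essSup_const_mul (f := g) (a := c) (μ := ν)
  have hr : 0 < p.toReal := ENNReal.toReal_pos hp0 hp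
  simp only [eLpNorm_eq_lintegral_rpow_enorm_toReal hp0 hp, enorm_eq_self,
    ENNReal.mul_rpow_of_nonneg _ _ hr.le]
  rw [lintegral_mul_const'' _ (hg.pow_const _), ENNReal.mul_rpow_of_nonneg _ _ (by positivity),
    ← ENNReal.rpow_mul, mul_one_div_cancel hr.ne', ENNReal.rpow_one]

lemma eLpNorm_restrict_eq_rpow_mul {ε : Type*} [TopologicalSpace ε] [ContinuousENorm ε]
    {μ : Measure α} {s : Set α} (hs0 : μ s ≠ 0) (hs : μ s ≠ ⊤) (g : α → ε) (p : ℝ≥0∞) :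
    eLpNorm g p (μ.restrict s) = μ s ^ (1 / p).toReal * eLpNorm g p ((μ s)⁻¹ • μ.restrict s) := by
  conv_lhs => rw [← one_smul ℝ≥0∞ (μ.restrict s), ← ENNReal.mul_inv_cancel hs0 hs, mul_smul]
  exact eLpNorm_smul_measure_of_ne_zero hs0 _ _ _

lemma continuous_eLpNorm_comp_left {𝕜 E F G : Type*} [NontriviallyNormedField 𝕜]
    [NormedAddCommGroup E] [NormedSpace 𝕜 E] [NormedAddCommGroup F] [NormedSpace 𝕜 F]
    [NormedAddCommGroup G] [NormedSpace 𝕜 G] {ν : Measure α} {q : ℝ≥0∞} (hq : 1 ≤ q)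
    {T : α → E →L[𝕜] F} (hT : AEStronglyMeasurable T ν) (hTq : eLpNorm T q ν ≠ ⊤) :
    Continuous fun A : F →L[𝕜] G => eLpNorm (fun y => A.comp (T y)) q ν := by
  have hcomp : ∀ A : F →L[𝕜] G, AEStronglyMeasurable (fun y => A.comp (T y)) ν := fun A =>
    (ContinuousLinearMap.compL 𝕜 E F G A).continuous.comp_aestronglyMeasurable hT
  refine continuous_of_le_add_edist (eLpNorm T q ν) hTq fun A B => ?_
  have hsplit :
      (fun y => A.comp (T y)) = (fun y => B.comp (T y)) + fun y => (A - B).comp (T y) := by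
    ext1 y
    simp [ContinuousLinearMap.sub_comp]
  calc eLpNorm (fun y => A.comp (T y)) q ν
      ≤ eLpNorm (fun y => B.comp (T y)) q ν + eLpNorm (fun y => (A - B).comp (T y)) q ν := by
        rw [hsplit]
        exact eLpNorm_add_le (ε := E →L[𝕜] G) (hcomp B) (hcomp (A - B)) hq
    _ ≤ eLpNorm (fun y => B.comp (T y)) q ν + eLpNorm T q ν * edist A B := by
        gcongr
        rw [edist_eq_enorm_sub, mul_comm]
        exact eLpNorm_le_nnreal_smul_eLpNorm_of_ae_le_mul
          (ae_of_all _ fun y => ContinuousLinearMap.opNNNorm_comp_le _ _) q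

theorem enorm_apply_integral_le {E F G : Type*} [NormedAddCommGroup E] [NormedSpace ℝ E]
    [CompleteSpace E] [NormedAddCommGroup F] [NormedSpace ℝ F] [CompleteSpace F]
    [NormedAddCommGroup G] [NormedSpace ℝ G] {ν : Measure α} {p q : ℝ≥0∞}
    [ENNReal.HolderConjugate q p]
    (T : E →L[ℝ] F) {W : α → E →L[ℝ] G} {Winv : α → G →L[ℝ] E}
    (hinv : ∀ᵐ y ∂ν, (Winv y).comp (W y) = ContinuousLinearMap.id ℝ E) {f : α → E}
    (hTWinv : AEStronglyMeasurable (fun y => T.comp (Winv y)) ν)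
    (hWf : AEStronglyMeasurable (fun y => W y (f y)) ν) :
    ‖T (∫ y, f y ∂ν)‖ₑ ≤
      eLpNorm (fun y => T.comp (Winv y)) q ν * eLpNorm (fun y => W y (f y)) p ν := by
  by_cases hf : Integrable f ν
  swap
  · simp [integral_undef hf]
  rw [← T.integral_comp_comm hf]
  calc ‖∫ y, T (f y) ∂ν‖ₑ ≤ ∫⁻ y, ‖T (f y)‖ₑ ∂ν := enorm_integral_le_lintegral_enorm _
    _ = eLpNorm (fun y => (T.comp (Winv y)) (W y (f y))) 1 ν := by
        rw [eLpNorm_one_eq_lintegral_enorm]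
        refine lintegral_congr_ae ?_
        filter_upwards [hinv] with y hy
        rw [ContinuousLinearMap.comp_apply, ← ContinuousLinearMap.comp_apply (Winv y), hy,
          ContinuousLinearMap.id_apply]
    _ ≤ (1 : ℝ≥0) * eLpNorm (fun y => T.comp (Winv y)) q ν * eLpNorm (fun y => W y (f y)) p ν :=
        eLpNorm_le_eLpNorm_mul_eLpNorm_of_nnnorm hTWinv hWf (fun A v => A v) 1
          (ae_of_all _ fun y => by simpa using (T.comp (Winv y)).le_opNNNorm (W y (f y)))
    _ = _ := by rw [ENNReal.coe_one, one_mul]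

theorem eLpNorm_indicator_prod_setAverage_le {ι : Type*} [Fintype ι]
    {E : ι → Type*} [∀ i, NormedAddCommGroup (E i)] [∀ i, NormedSpace ℝ (E i)]
    [∀ i, CompleteSpace (E i)] {μ : Measure α} {s : Set α} (hs : MeasurableSet s)
    (hs0 : μ s ≠ 0) (hs_top : μ s ≠ ⊤) {p p' : ι → ℝ≥0∞}
    [∀ i, ENNReal.HolderConjugate (p' i) (p i)] {p₀ : ℝ≥0∞} (hp₀ : p₀⁻¹ = ∑ i, (p i)⁻¹)
    {W Winv : ∀ i, α → E i →L[ℝ] E i} (hW : ∀ i, AEStronglyMeasurable (W i) μ)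
    (hWinv : ∀ i, AEStronglyMeasurable (Winv i) ((μ s)⁻¹ • μ.restrict s))
    (hWinv_top : ∀ i, eLpNorm (Winv i) (p' i) ((μ s)⁻¹ • μ.restrict s) ≠ ⊤)
    (hinv : ∀ i, ∀ᵐ y ∂μ, (Winv i y).comp (W i y) = ContinuousLinearMap.id ℝ (E i))
    {f : ∀ i, α → E i} (hf : ∀ i, AEStronglyMeasurable (f i) μ) :
    eLpNorm (s.indicator fun x => ∏ i, ‖W i x (⨍ y in s, f i y ∂μ)‖) p₀ μ ≤
      eLpNorm (fun x => ∏ i, eLpNorm (fun y => (W i x).comp (Winv i y)) (p' i)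
          ((μ s)⁻¹ • μ.restrict s)) p₀ ((μ s)⁻¹ • μ.restrict s) *
        ∏ i, eLpNorm (fun x => W i x (f i x)) (p i) μ := by
  set ν := (μ s)⁻¹ • μ.restrict s
  have hνμ : ν ≪ μ := (Measure.absolutelyContinuous_of_le Measure.restrict_le_self).smul_left _
  set K : α → ℝ≥0∞ := fun x => ∏ i, eLpNorm (fun y => (W i x).comp (Winv i y)) (p' i) ν
  set c : ι → ℝ≥0∞ := fun i => eLpNorm (fun x => W i x (f i x)) (p i) ν
  have hWf : ∀ i, AEStronglyMeasurable (fun x => W i x (f i x)) μ := fun i =>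
    (isBoundedBilinearMap_apply (𝕜 := ℝ)).continuous.comp_aestronglyMeasurable
      ((hW i).prodMk (hf i))
  -- The possibly infinite constant `∏ i, c i` can only be pulled out of the `L^{p₀}(ν)` norm of
  -- a measurable function; the `L^{p'}(ν)` bound on `Winv` makes `K` measurable.
  have hK : AEMeasurable K ν := Finset.aemeasurable_fun_prod _ fun i _ =>
    ((continuous_eLpNorm_comp_left (ENNReal.HolderConjugate.one_le _ (p i)) (hWinv i)
      (hWinv_top i)).comp_aestronglyMeasurable ((hW i).mono_ac hνμ)).aemeasurable
  have hpointwise : ∀ x, ‖∏ i, ‖W i x (⨍ y in s, f i y ∂μ)‖‖ₑ ≤ ‖K x * ∏ i, c i‖ₑ := by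
    intro x
    rw [enorm_eq_self, ← Finset.prod_mul_distrib, enorm_eq_nnnorm, nnnorm_prod,
      ENNReal.ofNNReal_finsetProd]
    refine Finset.prod_le_prod' fun i _ => ?_
    rw [nnnorm_norm, ← enorm_eq_nnnorm, setAverage_eq']
    exact enorm_apply_integral_le (W i x) ((hinv i).filter_mono hνμ.ae_le)
      ((ContinuousLinearMap.compL ℝ _ _ _ (W i x)).continuous.comp_aestronglyMeasurable
        (hWinv i)) ((hWf i).mono_ac hνμ)
  have hmass : μ s ^ (1 / p₀).toReal = ∏ i, μ s ^ (1 / p i).toReal := by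
    rw [← ENNReal.rpow_finset_sum _ hs0 hs_top, one_div, hp₀, ENNReal.toReal_sum]
    · simp only [one_div]
    · exact fun i _ => ENNReal.inv_ne_top.mpr (ENNReal.HolderConjugate.ne_zero _ (p' i))
  calc eLpNorm (s.indicator fun x => ∏ i, ‖W i x (⨍ y in s, f i y ∂μ)‖) p₀ μ
      = μ s ^ (1 / p₀).toReal * eLpNorm (fun x => ∏ i, ‖W i x (⨍ y in s, f i y ∂μ)‖) p₀ ν := by
        rw [eLpNorm_indicator_eq_eLpNorm_restrict hs, eLpNorm_restrict_eq_rpow_mul hs0 hs_top]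
    _ ≤ μ s ^ (1 / p₀).toReal * eLpNorm (fun x => K x * ∏ i, c i) p₀ ν := by
        gcongr 1
        exact eLpNorm_mono_enorm hpointwise
    _ = eLpNorm K p₀ ν * ∏ i, (μ s ^ (1 / p i).toReal * c i) := by
        rw [eLpNorm_mul_const_of_aemeasurable hK, hmass, Finset.prod_mul_distrib]
        ring
    _ ≤ eLpNorm K p₀ ν * ∏ i, eLpNorm (fun x => W i x (f i x)) (p i) μ := by
        gcongr with i
        rw [← eLpNorm_restrict_eq_rpow_mul hs0 hs_top]
        exact eLpNorm_mono_measure _ Measure.restrict_le_self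

end

lemma cube_eq_pi {d : ℕ} (a : Fin d → ℝ) (ℓ : ℝ) :
    cube a ℓ = Set.univ.pi fun i => Set.Icc (a i) (a i + ℓ) := by
  ext x
  simp only [cube, Set.mem_ofPred_eq, Set.mem_pi, Set.mem_univ, Set.mem_Icc, forall_const]

lemma measurableSet_cube {d : ℕ} (a : Fin d → ℝ) (ℓ : ℝ) : MeasurableSet (cube a ℓ) := by
  rw [cube_eq_pi]
  exact MeasurableSet.univ_pi fun _ => measurableSet_Icc

lemma volume_cube {d : ℕ} (a : Fin d → ℝ) (ℓ : ℝ) :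
    volume (cube a ℓ) = ENNReal.ofReal ℓ ^ d := by
  rw [cube_eq_pi, volume_pi_pi]
  simp [Real.volume_Icc]

theorem averaging_bound_of_roudenko_general {d m : ℕ}
    (V : Fin m → Type*) [∀ j, NormedAddCommGroup (V j)]
    [∀ j, InnerProductSpace ℝ (V j)] [∀ j, FiniteDimensional ℝ (V j)]
    (p : Fin m → ℝ≥0∞)
    (p' : Fin m → ℝ≥0∞) (hp' : ∀ j, (p j)⁻¹ + (p' j)⁻¹ = 1)
    (p₀ : ℝ≥0∞) (hp₀ : p₀⁻¹ = ∑ j, (p j)⁻¹)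
    (W Winv : ∀ j, (Fin d → ℝ) → (V j →L[ℝ] V j))
    (hWm : ∀ j, StronglyMeasurable (W j)) (hWim : ∀ j, StronglyMeasurable (Winv j))
    (hinv : ∀ j, ∀ᵐ x : Fin d → ℝ, (Winv j x).comp (W j x) = ContinuousLinearMap.id ℝ (V j) ∧
      (W j x).comp (Winv j x) = ContinuousLinearMap.id ℝ (V j))
    (hloc : ∀ j (a : Fin d → ℝ) (ℓ : ℝ), 0 < ℓ →
      avgLp (cubeAvg a ℓ) (p' j) (fun y => (‖Winv j y‖₊ : ℝ≥0∞)) < ⊤)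
    (R : ℝ≥0∞)
    (hR : ∀ (a : Fin d → ℝ) (ℓ : ℝ), 0 < ℓ →
      avgLp (cubeAvg a ℓ) p₀ (fun x =>
        ∏ j, avgLp (cubeAvg a ℓ) (p' j)
          (fun y => (‖(W j x).comp (Winv j y)‖₊ : ℝ≥0∞))) ≤ R) :
    ∀ (a : Fin d → ℝ) (ℓ : ℝ), 0 < ℓ →
      ∀ f : ∀ j, (Fin d → ℝ) → V j, (∀ j, AEStronglyMeasurable (f j) volume) →
      eLpNorm ((cube a ℓ).indicator fun x =>
          ∏ j, ‖(W j x) ((volume (cube a ℓ)).toReal⁻¹ • ∫ y in cube a ℓ, f j y)‖) p₀ volume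
        ≤ R * ∏ j, eLpNorm (fun x => ‖(W j x) (f j x)‖) (p j) volume := by
  intro a ℓ hℓ f hf
  have : ∀ j, ENNReal.HolderConjugate (p' j) (p j) := fun j =>
    ENNReal.holderConjugate_iff.mpr ((add_comm _ _).trans (hp' j))
  have hp'0 : ∀ j, p' j ≠ 0 := fun j => ENNReal.HolderConjugate.ne_zero _ (p j)
  have hp₀0 : p₀ ≠ 0 := by
    rw [← ENNReal.inv_ne_top, hp₀]
    exact ENNReal.sum_ne_top.mpr fun j _ =>
      ENNReal.inv_ne_top.mpr (ENNReal.HolderConjugate.ne_zero _ (p' j))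
  have hvol0 : volume (cube a ℓ) ≠ 0 := by simp [volume_cube, hℓ.not_ge]
  have hvol_top : volume (cube a ℓ) ≠ ⊤ := by simp [volume_cube]
  simp_rw [← measureReal_def, ← setAverage_eq, eLpNorm_norm]
  refine (eLpNorm_indicator_prod_setAverage_le (measurableSet_cube a ℓ) hvol0 hvol_top
    (p' := p') hp₀ (fun j => (hWm j).aestronglyMeasurable)
    (fun j => (hWim j).aestronglyMeasurable)
    (fun j => ?_) (fun j => (hinv j).mono fun _ h => h.1) hf).trans ?_
  · rw [← avgLp_nnnorm_eq_eLpNorm _ (hp'0 j)]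
    exact (hloc j a ℓ hℓ).ne
  · have hRQ := hR a ℓ hℓ
    simp only [avgLp_nnnorm_eq_eLpNorm _ (hp'0 _), avgLp_eq_eLpNorm _ hp₀0] at hRQ
    gcongr
    exact hRQ

/-- **The Roudenko-type quantity dominates the multilinear matrix Muckenhoupt characteristic.**
Let `p_j ∈ [1,∞]`, `1/p₀ = Σ 1/p_j`, and let `W_j` be matrix weights on `ℝ^d` with `W_j⁻¹`
locally `p_j'`-integrable.  If `R` bounds, over all cubes `Q`, the quantity
`( ⨍_Q ∏_j ( ⨍_Q ‖W_j(x) W_j(y)⁻¹‖^{p_j'} dy )^{p₀/p_j'} dx )^{1/p₀}`, then for every cube `Q`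
and all `f_j ∈ L^{p_j}_{W_j}` the averaging operator `T_Q(f⃗) = 1_Q ⊗_j ⟨f_j⟩_Q` satisfies
`‖T_Q f⃗‖_{L^{p₀}_{⊗W_j}} ≤ R ∏_j ‖f_j‖_{L^{p_j}_{W_j}}`; hence `[W⃗]_{p⃗} ≤ [W⃗]_{p⃗,op}`. -/
theorem averaging_bound_of_roudenko {d m : ℕ} (hm : 0 < m)
    (V : Fin m → Type*) [∀ j, NormedAddCommGroup (V j)]
    [∀ j, InnerProductSpace ℝ (V j)] [∀ j, FiniteDimensional ℝ (V j)]
    (p : Fin m → ℝ≥0∞) (hp1 : ∀ j, 1 ≤ p j)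
    (p' : Fin m → ℝ≥0∞) (hp' : ∀ j, (p j)⁻¹ + (p' j)⁻¹ = 1)
    (p₀ : ℝ≥0∞) (hp₀ : p₀⁻¹ = ∑ j, (p j)⁻¹)
    (W Winv : ∀ j, (Fin d → ℝ) → (V j →L[ℝ] V j))
    (hWm : ∀ j, StronglyMeasurable (W j)) (hWim : ∀ j, StronglyMeasurable (Winv j))
    (hinv : ∀ j, ∀ᵐ x : Fin d → ℝ, (Winv j x).comp (W j x) = ContinuousLinearMap.id ℝ (V j) ∧
      (W j x).comp (Winv j x) = ContinuousLinearMap.id ℝ (V j))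
    (hloc : ∀ j (a : Fin d → ℝ) (ℓ : ℝ), 0 < ℓ →
      avgLp (cubeAvg a ℓ) (p' j) (fun y => (‖Winv j y‖₊ : ℝ≥0∞)) < ⊤)
    (R : ℝ≥0∞)
    (hR : ∀ (a : Fin d → ℝ) (ℓ : ℝ), 0 < ℓ →
      avgLp (cubeAvg a ℓ) p₀ (fun x =>
        ∏ j, avgLp (cubeAvg a ℓ) (p' j)
          (fun y => (‖(W j x).comp (Winv j y)‖₊ : ℝ≥0∞))) ≤ R) :
    ∀ (a : Fin d → ℝ) (ℓ : ℝ), 0 < ℓ →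
      ∀ f : ∀ j, (Fin d → ℝ) → V j, (∀ j, AEStronglyMeasurable (f j) volume) →
      eLpNorm ((cube a ℓ).indicator fun x =>
          ∏ j, ‖(W j x) ((volume (cube a ℓ)).toReal⁻¹ • ∫ y in cube a ℓ, f j y)‖) p₀ volume
        ≤ R * ∏ j, eLpNorm (fun x => ‖(W j x) (f j x)‖) (p j) volume :=
  averaging_bound_of_roudenko_general V p p' hp' p₀ hp₀ W Winv hWm hWim hinv hloc R hR
end

section
/- Let p ∈ (0,∞], r ∈ (0,∞), s ∈ (ℝ∖{0}) ∪ {∞} with p ≥ r, 1/p ≥ 1/s, r ≠ s, and let W be a matrix weight on ℝ^d with [W]_{p,(r,s),op} < ∞. Define 1/κ := (1/p − 1/s)/(1/r − 1/s) ∈ [0,1] and 1/ρ := 1/r − 1/s. Then for every nonzero vector v ∈ H, the scalar weight w := ‖W v‖^ρ satisfies the scalar A_κ condition with [‖Wv‖^ρ]_κ^{1/ρ} ≤ [W]_{p,(r,s),op}, i.e. sup_Q ⟨w^κ⟩_Q^{1/κ} ⟨w^{-κ'}⟩_Q^{1/κ'} ≤ [W]_{p,(r,s),op}^ρ. -/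
/-!
Since `W(y)⁻¹ W(y) v = v`, we have `‖W(x) v‖ ≤ ‖W(x) W(y)⁻¹‖ ‖W(y) v‖`, so the kernel
`‖W(x) W(y)⁻¹‖` dominates `h(x) h(y)⁻¹` with `h = ‖W v‖`. Averaging in `y` in `L^t` and then in `x`
in `L^q` bounds `⟨h⟩_q ⟨h⁻¹⟩_t` by the characteristic on each cube. Because `q = κρ` and
`t = κ'ρ`, the `A_κ` product of `w = h^ρ` on a cube is exactly `(⟨h⟩_q ⟨h⁻¹⟩_t)^ρ`.
-/

open MeasureTheory ENNReal

/-- The two-parameter Roudenko-type characteristic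
`sup_Q ( ⨍_Q ( ⨍_Q A x y ^ t dy )^{q/t} dx )^{1/q}` of a kernel `A` (typically
`A x y = ‖W(x) W(y)⁻¹‖`), with inner exponent `t` and outer exponent `q`. -/
noncomputable def twoChar {d : ℕ} (A : (Fin d → ℝ) → (Fin d → ℝ) → ℝ≥0∞)
    (t q : ℝ≥0∞) : ℝ≥0∞ :=
  ⨆ (a : Fin d → ℝ) (ℓ : ℝ) (_ : 0 < ℓ),
    avgLp (cubeAvg a ℓ) q fun x => avgLp (cubeAvg a ℓ) t fun y => A x y

section avgLp

variable {α β : Type*} [MeasurableSpace α] [MeasurableSpace β] {ν : Measure α} {μ : Measure β}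

lemma avgLp_mono_ae (e : ℝ≥0∞) {f g : α → ℝ≥0∞} (h : f ≤ᵐ[ν] g) :
    avgLp ν e f ≤ avgLp ν e g := by
  unfold avgLp
  split_ifs
  · exact essSup_mono_ae h
  · exact ENNReal.rpow_le_rpow
      (lintegral_mono_ae (h.mono fun x hx => ENNReal.rpow_le_rpow hx ENNReal.toReal_nonneg))
      (by positivity)

lemma mul_avgLp_le {e : ℝ≥0∞} (he : e ≠ 0) (c : ℝ≥0∞) (f : α → ℝ≥0∞) :
    c * avgLp ν e f ≤ avgLp ν e (fun x => c * f x) := by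
  unfold avgLp
  split_ifs with htop
  · exact ENNReal.essSup_const_mul.ge
  · have hp : 0 < e.toReal := ENNReal.toReal_pos he htop
    calc c * (∫⁻ x, f x ^ e.toReal ∂ν) ^ (1 / e.toReal)
        = (c ^ e.toReal * ∫⁻ x, f x ^ e.toReal ∂ν) ^ (1 / e.toReal) := by
          rw [ENNReal.mul_rpow_of_nonneg _ _ (by positivity), ← ENNReal.rpow_mul,
            mul_one_div_cancel hp.ne', ENNReal.rpow_one]
      _ ≤ (∫⁻ x, (c * f x) ^ e.toReal ∂ν) ^ (1 / e.toReal) := by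
          simp_rw [ENNReal.mul_rpow_of_nonneg _ _ hp.le]
          gcongr
          exact lintegral_const_mul_le _ _

lemma avgLp_rpow (e : ℝ≥0∞) {ρ : ℝ} (hρ : 0 < ρ) (f : α → ℝ≥0∞) :
    avgLp ν e (fun x => f x ^ ρ) = avgLp ν (e * ENNReal.ofReal ρ) f ^ ρ := by
  by_cases htop : e = ⊤
  · have hρ0 : ENNReal.ofReal ρ ≠ 0 := by simp [hρ]
    rw [avgLp, avgLp, if_pos htop, if_pos (by rw [htop, top_mul hρ0])]
    exact (OrderIso.essSup_apply f ν (ENNReal.orderIsoRpow ρ hρ)).symm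
  · have hmul : (e * ENNReal.ofReal ρ).toReal = e.toReal * ρ := by
      rw [ENNReal.toReal_mul, ENNReal.toReal_ofReal hρ.le]
    rw [avgLp, avgLp, if_neg htop, if_neg (ENNReal.mul_ne_top htop ENNReal.ofReal_ne_top), hmul,
      ← ENNReal.rpow_mul]
    simp_rw [← ENNReal.rpow_mul, mul_comm ρ]
    congr 1
    field_simp

lemma avgLp_mul_avgLp_le {q t : ℝ≥0∞} (hq : q ≠ 0) (ht : t ≠ 0) {f : α → ℝ≥0∞}
    {g : β → ℝ≥0∞} {A : α → β → ℝ≥0∞} (hA : ∀ x, ∀ᵐ y ∂μ, f x * g y ≤ A x y) :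
    avgLp ν q f * avgLp μ t g ≤ avgLp ν q (fun x => avgLp μ t (A x)) :=
  calc avgLp ν q f * avgLp μ t g ≤ avgLp ν q (fun x => avgLp μ t g * f x) :=
        (mul_comm _ _).trans_le (mul_avgLp_le hq _ _)
    _ ≤ avgLp ν q (fun x => avgLp μ t (fun y => f x * g y)) :=
        avgLp_mono_ae q (Filter.Eventually.of_forall fun x =>
          (mul_comm _ _).trans_le (mul_avgLp_le ht _ _))
    _ ≤ avgLp ν q (fun x => avgLp μ t (A x)) :=
        avgLp_mono_ae q (Filter.Eventually.of_forall fun x => avgLp_mono_ae t (hA x))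

end avgLp

lemma cubeAvg_absolutelyContinuous {d : ℕ} (a : Fin d → ℝ) (ℓ : ℝ) :
    cubeAvg a ℓ ≪ volume :=
  Measure.absolutelyContinuous_restrict.smul_left _

lemma avgLp_cubeAvg_le_twoChar {d : ℕ} (A : (Fin d → ℝ) → (Fin d → ℝ) → ℝ≥0∞) (t q : ℝ≥0∞)
    (a : Fin d → ℝ) {ℓ : ℝ} (hℓ : 0 < ℓ) :
    avgLp (cubeAvg a ℓ) q (fun x => avgLp (cubeAvg a ℓ) t (A x)) ≤ twoChar A t q :=
  le_iSup_of_le a (le_iSup_of_le ℓ (le_iSup_of_le hℓ le_rfl))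

lemma nnnorm_apply_le_nnnorm_comp_mul {𝕜 E F G : Type*} [NontriviallyNormedField 𝕜]
    [SeminormedAddCommGroup E] [SeminormedAddCommGroup F] [SeminormedAddCommGroup G]
    [NormedSpace 𝕜 E] [NormedSpace 𝕜 F] [NormedSpace 𝕜 G]
    (T : F →L[𝕜] G) {S : E →L[𝕜] F} {U : F →L[𝕜] E} (hSU : S.comp U = .id 𝕜 F) (v : F) :
    ‖T v‖₊ ≤ ‖T.comp S‖₊ * ‖U v‖₊ := by
  have hv : S (U v) = v := by simpa using congrArg (· v) hSU
  simpa [hv] using (T.comp S).le_opNNNorm (U v)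

lemma inv_conjExponent_eq {κ κ' : ℝ≥0∞} {c c' δ : ℝ} (hc : 0 ≤ c) (hc' : 0 ≤ c')
    (hδ : c + c' = δ) (hδpos : 0 < δ)
    (hκ : κ⁻¹ = ENNReal.ofReal (c / δ)) (hκκ' : κ⁻¹ + κ'⁻¹ = 1) :
    κ'⁻¹ = ENNReal.ofReal (c' / δ) := by
  have hsum : κ⁻¹ + ENNReal.ofReal (c' / δ) = 1 := by
    rw [hκ, ← ENNReal.ofReal_add (by positivity) (by positivity), ← add_div, hδ,
      div_self hδpos.ne', ENNReal.ofReal_one]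
  exact (ENNReal.add_right_inj (hκ ▸ ENNReal.ofReal_ne_top)).mp (hκκ'.trans hsum.symm)

lemma eq_mul_ofReal_of_inv_eq {e e' : ℝ≥0∞} {c δ : ℝ} (hc : 0 ≤ c) (hδ : 0 < δ)
    (he : e⁻¹ = ENNReal.ofReal c) (he' : e'⁻¹ = ENNReal.ofReal (c / δ)) :
    e = e' * ENNReal.ofReal δ⁻¹ := by
  rw [ENNReal.ofReal_inv_of_pos hδ, ← inv_inv e, ← inv_inv e', he, he', ← ENNReal.mul_inv
    (Or.inr ENNReal.ofReal_ne_top) (Or.inl ENNReal.ofReal_ne_top),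
    ← ENNReal.ofReal_mul (by positivity), div_mul_cancel₀ _ hδ.ne']

open scoped RealInnerProductSpace

-- The exponents are encoded by reciprocals: `ir = 1/r`, `ip = 1/p`, `σ = 1/s`.
theorem scalar_Ap_from_twoChar_general {d : ℕ} {V : Type*} [NormedAddCommGroup V]
    [InnerProductSpace ℝ V]
    (ir σ ip : ℝ) (h1 : ip ≤ ir) (h2 : σ ≤ ip) (hne : ir ≠ σ)
    (t q κ κ' : ℝ≥0∞)
    (ht : t⁻¹ = ENNReal.ofReal (ir - ip)) (hq : q⁻¹ = ENNReal.ofReal (ip - σ))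
    (hκ : κ⁻¹ = ENNReal.ofReal ((ip - σ) / (ir - σ)))
    (hκ' : κ⁻¹ + κ'⁻¹ = 1)
    (ρ : ℝ) (hρ : ρ = (ir - σ)⁻¹)
    (W Winv : (Fin d → ℝ) → (V →L[ℝ] V))
    (hinv : ∀ᵐ x : Fin d → ℝ, (Winv x).comp (W x) = ContinuousLinearMap.id ℝ V ∧
      (W x).comp (Winv x) = ContinuousLinearMap.id ℝ V) :
    ∀ v : V, v ≠ 0 → ∀ (a : Fin d → ℝ) (ℓ : ℝ), 0 < ℓ →
      avgLp (cubeAvg a ℓ) κ (fun x => (‖W x v‖₊ : ℝ≥0∞) ^ ρ) *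
        avgLp (cubeAvg a ℓ) κ' (fun x => ((‖W x v‖₊ : ℝ≥0∞) ^ ρ)⁻¹)
        ≤ (twoChar (fun x y => (‖(W x).comp (Winv y)‖₊ : ℝ≥0∞)) t q) ^ ρ := by
  intro v _ a ℓ hℓ
  have hδ : 0 < ir - σ := sub_pos.2 (lt_of_le_of_ne (h2.trans h1) hne.symm)
  have hρpos : 0 < ρ := hρ ▸ inv_pos.2 hδ
  have hκ'inv : κ'⁻¹ = ENNReal.ofReal ((ir - ip) / (ir - σ)) :=
    inv_conjExponent_eq (by linarith) (by linarith) (by ring) hδ hκ hκ'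
  have hqκ : q = κ * ENNReal.ofReal ρ := hρ ▸ eq_mul_ofReal_of_inv_eq (by linarith) hδ hq hκ
  have htκ' : t = κ' * ENNReal.ofReal ρ :=
    hρ ▸ eq_mul_ofReal_of_inv_eq (by linarith) hδ ht hκ'inv
  have hker : ∀ x, ∀ᵐ y ∂cubeAvg a ℓ,
      (‖W x v‖₊ : ℝ≥0∞) * (‖W y v‖₊ : ℝ≥0∞)⁻¹ ≤ ‖(W x).comp (Winv y)‖₊ := fun x =>
    (cubeAvg_absolutelyContinuous a ℓ).ae_le (hinv.mono fun y hy => ENNReal.div_le_of_le_mul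
      (mod_cast nnnorm_apply_le_nnnorm_comp_mul (W x) hy.1 v))
  simp_rw [← ENNReal.inv_rpow]
  rw [avgLp_rpow κ hρpos, avgLp_rpow κ' hρpos, ← hqκ, ← htκ',
    ← ENNReal.mul_rpow_of_nonneg _ _ hρpos.le]
  gcongr
  exact (avgLp_mul_avgLp_le (inv_ne_top.1 (hq ▸ ofReal_ne_top))
    (inv_ne_top.1 (ht ▸ ofReal_ne_top)) hker).trans (avgLp_cubeAvg_le_twoChar _ t q a hℓ)

/-- **Scalar Muckenhoupt weights from a two-parameter matrix Muckenhoupt weight.**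
Let `p ∈ (0,∞]`, `r ∈ (0,∞)`, `s ∈ (ℝ∖{0}) ∪ {∞}` with `p ≥ r`, `1/p ≥ 1/s`, `r ≠ s` (encoded
through reciprocals `ip = 1/p`, `ir = 1/r`, `σ = 1/s` and exponents `1/t = 1/r − 1/p`,
`1/q = 1/p − 1/s`), and let `W` be a matrix weight with `[W]_{p,(r,s),op} < ∞`.  Define
`1/κ = (1/p − 1/s)/(1/r − 1/s) ∈ [0,1]` and `1/ρ = 1/r − 1/s`.  Then for every nonzero `v`, the
scalar weight `w = ‖W v‖^ρ` satisfies the `A_κ` condition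
`sup_Q ⟨w^κ⟩_Q^{1/κ} ⟨w^{−κ'}⟩_Q^{1/κ'} ≤ [W]_{p,(r,s),op}^ρ`. -/
theorem scalar_Ap_from_twoChar {d : ℕ} {V : Type*} [NormedAddCommGroup V]
    [InnerProductSpace ℝ V] [FiniteDimensional ℝ V]
    (ir σ ip : ℝ) (hr : 0 < ir) (h0 : 0 ≤ ip) (h1 : ip ≤ ir) (h2 : σ ≤ ip) (hne : ir ≠ σ)
    (t q κ κ' : ℝ≥0∞)
    (ht : t⁻¹ = ENNReal.ofReal (ir - ip)) (hq : q⁻¹ = ENNReal.ofReal (ip - σ))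
    (hκ : κ⁻¹ = ENNReal.ofReal ((ip - σ) / (ir - σ)))
    (hκ' : κ⁻¹ + κ'⁻¹ = 1)
    (ρ : ℝ) (hρ : ρ = (ir - σ)⁻¹)
    (W Winv : (Fin d → ℝ) → (V →L[ℝ] V))
    (hWm : StronglyMeasurable W) (hWim : StronglyMeasurable Winv)
    (hsa : ∀ᵐ x : Fin d → ℝ, ∀ u v : V, ⟪W x u, v⟫ = ⟪u, W x v⟫)
    (hpos : ∀ᵐ x : Fin d → ℝ, ∀ u : V, u ≠ 0 → 0 < ⟪W x u, u⟫)
    (hinv : ∀ᵐ x : Fin d → ℝ, (Winv x).comp (W x) = ContinuousLinearMap.id ℝ V ∧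
      (W x).comp (Winv x) = ContinuousLinearMap.id ℝ V)
    (hfin : twoChar (fun x y => (‖(W x).comp (Winv y)‖₊ : ℝ≥0∞)) t q < ⊤) :
    ∀ v : V, v ≠ 0 → ∀ (a : Fin d → ℝ) (ℓ : ℝ), 0 < ℓ →
      avgLp (cubeAvg a ℓ) κ (fun x => (‖W x v‖₊ : ℝ≥0∞) ^ ρ) *
        avgLp (cubeAvg a ℓ) κ' (fun x => ((‖W x v‖₊ : ℝ≥0∞) ^ ρ)⁻¹)
        ≤ (twoChar (fun x y => (‖(W x).comp (Winv y)‖₊ : ℝ≥0∞)) t q) ^ ρ :=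
  scalar_Ap_from_twoChar_general ir σ ip h1 h2 hne t q κ κ' ht hq hκ hκ' ρ hρ W Winv hinv
end

section
/- Let p⃗ ∈ (0,∞]^m, r⃗ ∈ (0,∞)^m, s ∈ (ℝ∖{0}) ∪ {∞} with p⃗ ≥ r⃗ and 1/p ≥ 1/s, where 1/p = Σ_j 1/p_j and 1/r = Σ_j 1/r_j. If W⃗ is an m-tuple of matrix weights with [W⃗]_{p⃗,(r⃗,s),op} < ∞, then the tensor product weight W = ⊗_j W_j satisfies [W]_{p,(r,s),op} ≤ [W⃗]_{p⃗,(r⃗,s),op}. -/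
/-! For a fixed cube and a fixed outer point `x`, Hölder's inequality with exponents `t_j / t`
(`1/t = Σ_j 1/t_j`) bounds the inner `L^t`-average of the product kernel `∏_j A_j x ·` by the
product of the inner `L^{t_j}`-averages of the `A_j x ·`. The outer average and the supremum over
cubes are monotone, so the bound passes to the characteristics. -/

open MeasureTheory ENNReal

/-- The multilinear two-parameter Roudenko-type characteristic
`sup_Q ( ⨍_Q ∏_j ( ⨍_Q A_j x y ^ t_j dy )^{q/t_j} dx )^{1/q}`, with
`A_j x y = ‖W_j(x) W_j(y)⁻¹‖`. -/
noncomputable def multiChar {d m : ℕ} (A : Fin m → (Fin d → ℝ) → (Fin d → ℝ) → ℝ≥0∞)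
    (t : Fin m → ℝ≥0∞) (q : ℝ≥0∞) : ℝ≥0∞ :=
  ⨆ (a : Fin d → ℝ) (ℓ : ℝ) (_ : 0 < ℓ),
    avgLp (cubeAvg a ℓ) q fun x => ∏ j, avgLp (cubeAvg a ℓ) (t j) fun y => A j x y

open Finset

section avgLp

variable {α : Type*} [MeasurableSpace α] (ν : Measure α)

theorem avgLp_mono (t : ℝ≥0∞) {f g : α → ℝ≥0∞} (hfg : ∀ x, f x ≤ g x) :
    avgLp ν t f ≤ avgLp ν t g := by
  unfold avgLp
  split
  · exact essSup_mono_ae (.of_forall hfg)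
  · gcongr with x
    exact hfg x

theorem avgLp_enorm_eq_eLpNorm {ε : Type*} [ENorm ε] (f : α → ε) {t : ℝ≥0∞} (ht : t ≠ 0) :
    avgLp ν t (fun x => ‖f x‖ₑ) = eLpNorm f t ν := by
  unfold avgLp eLpNorm
  split <;> simp_all [eLpNormEssSup, eLpNorm']

theorem eLpNorm_prod_le_prod_eLpNorm {ι 𝕜 : Type*} [NormedCommRing 𝕜] [NormOneClass 𝕜]
    (s : Finset ι) {f : ι → α → 𝕜} (hf : ∀ i ∈ s, AEStronglyMeasurable (f i) ν)
    (p : ι → ℝ≥0∞) :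
    eLpNorm (∏ i ∈ s, f i) (∑ i ∈ s, (p i)⁻¹)⁻¹ ν ≤ ∏ i ∈ s, eLpNorm (f i) (p i) ν := by
  induction s using cons_induction with
  | empty =>
    by_cases hν : ν = 0 <;> simp [eLpNormEssSup_const, hν, Pi.one_def]
  | cons i s hi ih =>
    rw [prod_cons, prod_cons, sum_cons]
    have hs := forall_of_forall_cons hf
    calc eLpNorm (fun x => f i x * (∏ j ∈ s, f j) x) ((p i)⁻¹ + ∑ j ∈ s, (p j)⁻¹)⁻¹ ν
        ≤ 1 * eLpNorm (f i) (p i) ν * eLpNorm (∏ j ∈ s, f j) (∑ j ∈ s, (p j)⁻¹)⁻¹ ν :=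
          eLpNorm_le_eLpNorm_mul_eLpNorm'_of_norm (hf i (mem_cons_self ..))
            (s.aestronglyMeasurable_prod hs) (· * ·) 1
            (.of_forall fun x => by simpa using norm_mul_le _ _) (hpqr := ⟨by simp⟩)
      _ ≤ eLpNorm (f i) (p i) ν * ∏ j ∈ s, eLpNorm (f j) (p j) ν := by
          rw [one_mul]
          exact mul_le_mul_right (ih hs) _

theorem avgLp_prod_enorm_le {ι 𝕜 : Type*} [NormedCommRing 𝕜] [NormMulClass 𝕜] [NormOneClass 𝕜]
    (s : Finset ι) {f : ι → α → 𝕜} (hf : ∀ i ∈ s, AEStronglyMeasurable (f i) ν)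
    {p : ι → ℝ≥0∞} (hp : ∀ i ∈ s, p i ≠ 0) :
    avgLp ν (∑ i ∈ s, (p i)⁻¹)⁻¹ (fun x => ∏ i ∈ s, ‖f i x‖ₑ)
      ≤ ∏ i ∈ s, avgLp ν (p i) (fun x => ‖f i x‖ₑ) := by
  have hsum : (∑ i ∈ s, (p i)⁻¹)⁻¹ ≠ 0 :=
    ENNReal.inv_ne_zero.2 (ENNReal.sum_ne_top.2 fun i hi => ENNReal.inv_ne_top.2 (hp i hi))
  have hnorm : ∀ x, ∏ i ∈ s, ‖f i x‖ₑ = ‖(∏ i ∈ s, f i) x‖ₑ := fun x => by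
    simp only [enorm_eq_nnnorm, Finset.prod_apply, nnnorm_prod, ENNReal.ofNNReal_finsetProd]
  simp only [hnorm, avgLp_enorm_eq_eLpNorm ν _ hsum]
  rw [prod_congr rfl fun i hi => avgLp_enorm_eq_eLpNorm ν (f i) (hp i hi)]
  exact eLpNorm_prod_le_prod_eLpNorm ν s hf p

end avgLp

open scoped RealInnerProductSpace

/-- Here `ir j = 1/r_j` and `ip j = 1/p_j`; the kernel of `⊗_j W_j` is written directly as
`∏_j ‖W_j(x) W_j(y)⁻¹‖`, the operator norm being multiplicative on tensor products. -/
theorem tensor_twoChar_le_multiChar_general {d m : ℕ}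
    (V : Fin m → Type*) [∀ j, NormedAddCommGroup (V j)]
    [∀ j, InnerProductSpace ℝ (V j)]
    (ir ip : Fin m → ℝ)
    (t : Fin m → ℝ≥0∞) (ht : ∀ j, (t j)⁻¹ = ENNReal.ofReal (ir j - ip j))
    (tt q : ℝ≥0∞) (htt : tt⁻¹ = ∑ j, (t j)⁻¹)
    (W Winv : ∀ j, (Fin d → ℝ) → (V j →L[ℝ] V j))
    (hWim : ∀ j, StronglyMeasurable (Winv j)) :
    twoChar (fun x y => ∏ j, (‖(W j x).comp (Winv j y)‖₊ : ℝ≥0∞)) tt q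
      ≤ multiChar (fun j x y => (‖(W j x).comp (Winv j y)‖₊ : ℝ≥0∞)) t q := by
  have ht0 : ∀ j ∈ univ, t j ≠ 0 := fun j _ h => by simpa [h] using ht j
  have hmeas : ∀ j x, StronglyMeasurable fun y => ‖(W j x).comp (Winv j y)‖ := fun j x =>
    ((ContinuousLinearMap.compL ℝ _ _ _ (W j x)).continuous.comp_stronglyMeasurable (hWim j)).norm
  rw [← inv_inv tt, htt]
  unfold twoChar multiChar
  refine iSup_mono fun a => iSup_mono fun ℓ => iSup_mono fun _ => avgLp_mono _ _ fun x => ?_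
  simpa only [enorm_eq_nnnorm, nnnorm_norm] using
    avgLp_prod_enorm_le _ univ (fun j _ => (hmeas j x).aestronglyMeasurable) ht0

/-- **The tensor product weight inherits the linear two-parameter Muckenhoupt condition.**
Let `p⃗ ∈ (0,∞]^m`, `r⃗ ∈ (0,∞)^m`, `s ∈ (ℝ∖{0}) ∪ {∞}` with `p⃗ ≥ r⃗` and `1/p ≥ 1/s` (encoded
through reciprocals `ip_j = 1/p_j`, `ir_j = 1/r_j`, `σ = 1/s`, with `1/t_j = 1/r_j − 1/p_j`,
`1/t = Σ_j 1/t_j` and `1/q = Σ_j 1/p_j − 1/s`).  Then the tensor product weight `⊗_j W_j`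
— whose kernel `‖(⊗W_j)(x) (⊗W_j)(y)⁻¹‖` is `∏_j ‖W_j(x)W_j(y)⁻¹‖` — satisfies
`[⊗W_j]_{p,(r,s),op} ≤ [W⃗]_{p⃗,(r⃗,s),op}`. -/
theorem tensor_twoChar_le_multiChar {d m : ℕ} (hm : 0 < m)
    (V : Fin m → Type*) [∀ j, NormedAddCommGroup (V j)]
    [∀ j, InnerProductSpace ℝ (V j)] [∀ j, FiniteDimensional ℝ (V j)]
    (ir ip : Fin m → ℝ) (σ : ℝ)
    (hr : ∀ j, 0 < ir j) (h0 : ∀ j, 0 ≤ ip j) (h1 : ∀ j, ip j ≤ ir j) (h2 : σ ≤ ∑ j, ip j)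
    (t : Fin m → ℝ≥0∞) (ht : ∀ j, (t j)⁻¹ = ENNReal.ofReal (ir j - ip j))
    (tt q : ℝ≥0∞) (htt : tt⁻¹ = ∑ j, (t j)⁻¹)
    (hq : q⁻¹ = ENNReal.ofReal ((∑ j, ip j) - σ))
    (W Winv : ∀ j, (Fin d → ℝ) → (V j →L[ℝ] V j))
    (hWm : ∀ j, StronglyMeasurable (W j)) (hWim : ∀ j, StronglyMeasurable (Winv j))
    (hsa : ∀ j, ∀ᵐ x : Fin d → ℝ, ∀ u v : V j, ⟪W j x u, v⟫ = ⟪u, W j x v⟫)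
    (hpos : ∀ j, ∀ᵐ x : Fin d → ℝ, ∀ u : V j, u ≠ 0 → 0 < ⟪W j x u, u⟫)
    (hinv : ∀ j, ∀ᵐ x : Fin d → ℝ,
      (Winv j x).comp (W j x) = ContinuousLinearMap.id ℝ (V j) ∧
      (W j x).comp (Winv j x) = ContinuousLinearMap.id ℝ (V j)) :
    twoChar (fun x y => ∏ j, (‖(W j x).comp (Winv j y)‖₊ : ℝ≥0∞)) tt q
      ≤ multiChar (fun j x y => (‖(W j x).comp (Winv j y)‖₊ : ℝ≥0∞)) t q :=
  tensor_twoChar_le_multiChar_general V ir ip t ht tt q htt W Winv hWim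
end
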